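/- arXiv:1311.0697 — 8 statements merged into one kernel-verified Lean document; each statement's English description precedes it below -/
import Mathlib

section
/- Let Γ be a profinite group, 𝔊 a profinite Γ-group and η : Γ → 𝔊 a generating cocycle with kernel Δ. For any family (a_i)_{i∈I} of ideals of 𝔊 and any family (Λ_i)_{i∈I} of closed subgroups of Γ containing Δ one has S(⋂_{i∈I} a_i) = ⋂_{i∈I} S(a_i) and J(⋁_{i∈I} Λ_i) = ⋁_{i∈I} J(Λ_i), where ⋁ of closed subgroups (resp. of ideals) denotes the smallest closed subgroup (resp. smallest ideal) containing all members of the family. -/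
/-- An *ideal* of a topological `Γ`-group `𝔊`: a closed, normal, `Γ`-invariant subgroup. -/
def IsIdealSG (Γ : Type*) {𝔊 : Type*} [Group 𝔊] [TopologicalSpace 𝔊] [SMul Γ 𝔊]
    (a : Subgroup 𝔊) : Prop :=
  IsClosed (a : Set 𝔊) ∧ a.Normal ∧ ∀ (γ : Γ) (g : 𝔊), g ∈ a → γ • g ∈ a

/-- `cogalJ Γ η X` is the smallest ideal of the `Γ`-group `𝔊` containing `η '' X`. -/
def cogalJ (Γ : Type*) {𝔊 : Type*} [Group 𝔊] [TopologicalSpace 𝔊] [SMul Γ 𝔊]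
    (η : Γ → 𝔊) (X : Set Γ) : Subgroup 𝔊 :=
  sInf {a : Subgroup 𝔊 | IsIdealSG Γ a ∧ ∀ γ ∈ X, η γ ∈ a}

/-- The smallest ideal of the `Γ`-group `𝔊` containing all members of a family of subgroups. -/
def idealSup (Γ : Type*) {𝔊 : Type*} [Group 𝔊] [TopologicalSpace 𝔊] [SMul Γ 𝔊]
    (S : Set (Subgroup 𝔊)) : Subgroup 𝔊 :=
  sInf {a : Subgroup 𝔊 | IsIdealSG Γ a ∧ ∀ b ∈ S, b ≤ a}

/-!
`S` commutes with intersections because preimages do. For an ideal `a`, the cocycle identity and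
the `Γ`-invariance of `a` make `S(a) = η⁻¹(a)` a subgroup of `Γ`, closed by continuity of `η`.
Hence `J(Λ) ≤ a ↔ Λ ≤ S(a)` for every closed `Λ`, and both sides of the identity for `J` are the
infimum of the same ideals: those `a` with `Λ i ≤ S(a)` for all `i`.
-/

section Cocycle

variable {Γ 𝔊 : Type*} [Group Γ] [Group 𝔊] [MulAction Γ 𝔊] {η : Γ → 𝔊}

lemma cocycle_map_one (hcoc : ∀ σ τ : Γ, η (σ * τ) = η σ * σ • η τ) : η 1 = 1 := by
  simpa using hcoc 1 1

lemma cocycle_map_inv (hcoc : ∀ σ τ : Γ, η (σ * τ) = η σ * σ • η τ) (σ : Γ) :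
    η σ⁻¹ = (σ⁻¹ • η σ)⁻¹ :=
  eq_inv_of_mul_eq_one_left (by rw [← hcoc, inv_mul_cancel, cocycle_map_one hcoc])

def cocyclePreimage (hcoc : ∀ σ τ : Γ, η (σ * τ) = η σ * σ • η τ) (a : Subgroup 𝔊)
    (ha : ∀ (γ : Γ) (g : 𝔊), g ∈ a → γ • g ∈ a) : Subgroup Γ where
  carrier := η ⁻¹' a
  one_mem' := by simp [cocycle_map_one hcoc, a.one_mem]
  mul_mem' {σ τ} hσ hτ := by simpa [hcoc] using a.mul_mem hσ (ha σ _ hτ)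
  inv_mem' {σ} hσ := by simpa [cocycle_map_inv hcoc] using ha σ⁻¹ _ hσ

end Cocycle

lemma cogalJ_le_iff {Γ 𝔊 : Type*} [Group 𝔊] [TopologicalSpace 𝔊] [SMul Γ 𝔊] {η : Γ → 𝔊}
    {a : Subgroup 𝔊} (ha : IsIdealSG Γ a) {X : Set Γ} :
    cogalJ Γ η X ≤ a ↔ ∀ γ ∈ X, η γ ∈ a :=
  ⟨fun h γ hγ => h (Subgroup.mem_sInf.2 fun _ hb => hb.2 γ hγ), fun h => sInf_le ⟨ha, h⟩⟩

lemma forall_mem_topologicalClosure_iSup_iff_cogalJ_le {Γ 𝔊 I : Type*} [Group Γ]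
    [TopologicalSpace Γ] [IsTopologicalGroup Γ] [Group 𝔊] [TopologicalSpace 𝔊]
    [MulAction Γ 𝔊] {η : Γ → 𝔊} (hcont : Continuous η)
    (hcoc : ∀ σ τ : Γ, η (σ * τ) = η σ * σ • η τ) {a : Subgroup 𝔊} (ha : IsIdealSG Γ a)
    (Λ : I → Subgroup Γ) :
    (∀ γ ∈ (⨆ i, Λ i).topologicalClosure, η γ ∈ a) ↔ ∀ i, cogalJ Γ η (Λ i) ≤ a := by
  simp only [cogalJ_le_iff ha]
  change _ ≤ cocyclePreimage hcoc a ha.2.2 ↔ ∀ i, Λ i ≤ cocyclePreimage hcoc a ha.2.2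
  rw [← iSup_le_iff]
  exact ⟨(Subgroup.le_topologicalClosure _).trans,
    fun h => Subgroup.topologicalClosure_minimal _ h (ha.1.preimage hcont)⟩

theorem cogalS_inter_and_cogalJ_sup_general
    {Γ 𝔊 : Type*} [Group Γ] [TopologicalSpace Γ] [IsTopologicalGroup Γ]
    [Group 𝔊] [TopologicalSpace 𝔊]
    [MulDistribMulAction Γ 𝔊]
    (η : Γ → 𝔊) (hcont : Continuous η)
    (hcoc : ∀ σ τ : Γ, η (σ * τ) = η σ * σ • η τ)
    {I : Type*} :
    (∀ a : I → Subgroup 𝔊, (∀ i, IsIdealSG Γ (a i)) →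
        η ⁻¹' ((⨅ i, a i : Subgroup 𝔊) : Set 𝔊) = ⋂ i, η ⁻¹' ((a i : Set 𝔊))) ∧
    (∀ Λ : I → Subgroup Γ,
        (∀ i, IsClosed ((Λ i : Set Γ)) ∧ ∀ γ : Γ, η γ = 1 → γ ∈ Λ i) →
        cogalJ Γ η (((⨆ i, Λ i : Subgroup Γ).topologicalClosure : Subgroup Γ) : Set Γ) =
          idealSup Γ {b : Subgroup 𝔊 | ∃ i, b = cogalJ Γ η ((Λ i : Set Γ))}) := by
  refine ⟨fun a _ => by simp only [Subgroup.coe_iInf, Set.preimage_iInter], fun Λ _ => ?_⟩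
  rw [cogalJ, idealSup]
  congr 1
  ext a
  refine and_congr_right fun ha => ?_
  exact (forall_mem_topologicalClosure_iSup_iff_cogalJ_le hcont hcoc ha Λ).trans
    ⟨fun h _ ⟨i, hb⟩ => hb ▸ h i, fun h i => h _ ⟨i, rfl⟩⟩

/-- For a generating cocycle `η : Γ → 𝔊`, the operator `S = η ⁻¹(·)` turns arbitrary
intersections of ideals into intersections, and the operator `J` turns arbitrary joins of
closed subgroups containing `Δ = ker η` (the smallest closed subgroup containing the union)
into joins of ideals (the smallest ideal containing the union). -/
theorem cogalS_inter_and_cogalJ_sup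
    {Γ 𝔊 : Type*} [Group Γ] [TopologicalSpace Γ] [IsTopologicalGroup Γ]
    [CompactSpace Γ] [T2Space Γ] [TotallyDisconnectedSpace Γ]
    [Group 𝔊] [TopologicalSpace 𝔊] [IsTopologicalGroup 𝔊]
    [CompactSpace 𝔊] [T2Space 𝔊] [TotallyDisconnectedSpace 𝔊]
    [MulDistribMulAction Γ 𝔊] [ContinuousSMul Γ 𝔊]
    (η : Γ → 𝔊) (hcont : Continuous η)
    (hcoc : ∀ σ τ : Γ, η (σ * τ) = η σ * σ • η τ)
    (hgen : (Subgroup.closure (Set.range η)).topologicalClosure = ⊤)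
    {I : Type*} :
    (∀ a : I → Subgroup 𝔊, (∀ i, IsIdealSG Γ (a i)) →
        η ⁻¹' ((⨅ i, a i : Subgroup 𝔊) : Set 𝔊) = ⋂ i, η ⁻¹' ((a i : Set 𝔊))) ∧
    (∀ Λ : I → Subgroup Γ,
        (∀ i, IsClosed ((Λ i : Set Γ)) ∧ ∀ γ : Γ, η γ = 1 → γ ∈ Λ i) →
        cogalJ Γ η (((⨆ i, Λ i : Subgroup Γ).topologicalClosure : Subgroup Γ) : Set Γ) =
          idealSup Γ {b : Subgroup 𝔊 | ∃ i, b = cogalJ Γ η ((Λ i : Set Γ))}) :=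
  cogalS_inter_and_cogalJ_sup_general η hcont hcoc
end

section
/- Let η : Γ → 𝔊 be a generating cocycle, Δ := ker η, Δ' := Fix_Γ(𝔊), Δ'' := {σ ∈ Γ : γ•η(σ) = η(γσγ⁻¹) for all γ ∈ Γ}, Δ̄ := Δ' ∩ Δ'' and Δ̃ := Δ ∩ Δ'. Then: (1) Δ'' is a closed normal subgroup of Γ and is the largest closed normal subgroup Λ of Γ such that η(γσγ⁻¹) = γ•η(σ) for all σ ∈ Λ and γ ∈ Γ; in particular Δ̄ is a closed normal subgroup of Γ containing Δ̃; (2) if 𝔊 is abelian then Δ' ⊆ Δ'', so Δ̄ = Δ'; (3) η(Δ̄) is a subgroup of 𝔊 contained in the center C(𝔊) of 𝔊 and η(Δ̄) = J(Δ̄), so η(Δ̄) is an ideal of 𝔊; (4) Δ̄ = Δ' ∩ η⁻¹(C(𝔊)); (5) η restricts to an isomorphism of topological groups from Δ̄/Δ̃ onto η(Δ̄). -/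
/-!
Elements of `Δ' = Fix_Γ(𝔊)` act trivially, so `η` is a homomorphism on `Δ'`, and for `σ ∈ Δ'`
the cocycle identity gives `η(γσγ⁻¹) = η(γ) · (γ • η(σ)) · η(γ)⁻¹`. Hence `σ ∈ Δ'` lies in `Δ''`
exactly when every `γ • η(σ)` commutes with `η(γ)`; this holds when `η(σ)` is central, and
conversely for `σ ∈ Δ̄` one gets that `η(σ)` commutes with all of `η(Γ)`, hence is central because
`η(Γ)` generates `𝔊` topologically. On the compact group `Δ̄` the map `η` is then a continuous
homomorphism with kernel `Δ̃`, whose image is a closed central `Γ`-stable subgroup, and a continuous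
bijection from the compact quotient `Δ̄/Δ̃` onto a Hausdorff group is a homeomorphism.
-/

open MulDistribMulAction

theorem cogalJ_eq_of_isIdealSG {Γ 𝔊 : Type*} [Group 𝔊] [TopologicalSpace 𝔊] [SMul Γ 𝔊]
    {η : Γ → 𝔊} {X : Set Γ} {a : Subgroup 𝔊} (ha : IsIdealSG Γ a)
    (h : (a : Set 𝔊) = η '' X) : cogalJ Γ η X = a :=
  le_antisymm (sInf_le ⟨ha, fun γ hγ => by rw [← SetLike.mem_coe, h]; exact ⟨γ, hγ, rfl⟩⟩)
    (le_sInf fun _ ⟨_, hb⟩ x hx => by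
      obtain ⟨γ, hγ, rfl⟩ := (Set.ext_iff.mp h x).mp hx
      exact hb γ hγ)

theorem Subgroup.normal_of_le_center {G : Type*} [Group G] {H : Subgroup G}
    (h : H ≤ Subgroup.center G) : H.Normal :=
  ⟨fun n hn g => by rwa [(Subgroup.mem_center_iff.mp (h hn) g), mul_inv_cancel_right]⟩

theorem Subgroup.mem_center_of_forall_commute {G : Type*} [Group G] [TopologicalSpace G]
    [IsTopologicalGroup G] [T2Space G] {s : Set G}
    (hs : (Subgroup.closure s).topologicalClosure = ⊤) {x : G} (hx : ∀ y ∈ s, Commute y x) :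
    x ∈ Subgroup.center G := by
  have htop : ⊤ ≤ Subgroup.centralizer {x} := hs ▸
    Subgroup.topologicalClosure_minimal _
      ((Subgroup.closure_le _).mpr fun y hy _ hz =>
        (Set.mem_singleton_iff.mp hz) ▸ (hx y hy).symm.eq)
      (Set.isClosed_centralizer _)
  exact Subgroup.mem_center_iff.mpr fun g =>
    (Subgroup.mem_centralizer_iff.mp (htop (Subgroup.mem_top g)) x rfl).symm

noncomputable def MonoidHom.quotientKerHomeomorphRange {G H : Type*} [Group G]
    [TopologicalSpace G] [CompactSpace G] [Group H] [TopologicalSpace H] [T2Space H]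
    (f : G →* H) (hf : Continuous f) : G ⧸ f.ker ≃ₜ f.range :=
  Continuous.homeoOfEquivCompactToT2 (f := (QuotientGroup.quotientKerEquivRange f).toEquiv)
    ((QuotientGroup.isQuotientMap_mk f.ker).continuous_iff.mpr (hf.subtype_mk _))

section Action

variable {Γ 𝔊 : Type*} [Group Γ] [Group 𝔊] [MulDistribMulAction Γ 𝔊]

theorem mem_ker_toMulAut_iff {γ : Γ} : γ ∈ (toMulAut Γ 𝔊).ker ↔ ∀ g : 𝔊, γ • g = g := by
  simp [MulEquiv.ext_iff]

theorem coe_ker_toMulAut : ((toMulAut Γ 𝔊).ker : Set Γ) = {γ | ∀ g : 𝔊, γ • g = g} :=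
  Set.ext fun _ => mem_ker_toMulAut_iff

theorem isClosed_ker_toMulAut [TopologicalSpace Γ] [TopologicalSpace 𝔊] [ContinuousSMul Γ 𝔊]
    [T2Space 𝔊] : IsClosed ((toMulAut Γ 𝔊).ker : Set Γ) := by
  rw [coe_ker_toMulAut, Set.ofPred_forall]
  exact isClosed_iInter fun g => isClosed_eq (continuous_id.smul continuous_const) continuous_const

theorem smul_mem_center (γ : Γ) {g : 𝔊} (hg : g ∈ Subgroup.center 𝔊) :
    γ • g ∈ Subgroup.center 𝔊 :=
  MulEquivClass.apply_mem_center (toMulAut Γ 𝔊 γ) hg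

end Action

/-- A non-abelian 1-cocycle. -/
def IsCrossedHom {Γ 𝔊 : Type*} [Group Γ] [Group 𝔊] [MulDistribMulAction Γ 𝔊]
    (η : Γ → 𝔊) : Prop :=
  ∀ σ τ : Γ, η (σ * τ) = η σ * σ • η τ

namespace IsCrossedHom

variable {Γ 𝔊 : Type*} [Group Γ] [Group 𝔊] [MulDistribMulAction Γ 𝔊] {η : Γ → 𝔊}

theorem map_one (hη : IsCrossedHom η) : η 1 = 1 := by
  simpa using hη 1 1

theorem smul_map_inv (hη : IsCrossedHom η) (γ : Γ) : γ • η γ⁻¹ = (η γ)⁻¹ :=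
  eq_inv_of_mul_eq_one_right (by rw [← hη, mul_inv_cancel, hη.map_one])

theorem map_inv (hη : IsCrossedHom η) (σ : Γ) : η σ⁻¹ = (σ⁻¹ • η σ)⁻¹ := by
  rw [← smul_inv', ← hη.smul_map_inv, inv_smul_smul]

theorem map_mul_of_mem_ker (hη : IsCrossedHom η) {σ : Γ} (hσ : σ ∈ (toMulAut Γ 𝔊).ker)
    (τ : Γ) : η (σ * τ) = η σ * η τ := by
  rw [hη, mem_ker_toMulAut_iff.mp hσ]

theorem map_conj_of_mem_ker (hη : IsCrossedHom η) {σ : Γ} (hσ : σ ∈ (toMulAut Γ 𝔊).ker)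
    (γ : Γ) : η (γ * σ * γ⁻¹) = η γ * γ • η σ * (η γ)⁻¹ := by
  rw [mul_assoc, hη, hη.map_mul_of_mem_ker hσ, smul_mul', hη.smul_map_inv, mul_assoc]

/-- `Δ''`. -/
def equivariantSubgroup (hη : IsCrossedHom η) : Subgroup Γ where
  carrier := {σ | ∀ γ : Γ, γ • η σ = η (γ * σ * γ⁻¹)}
  one_mem' γ := by simp [hη.map_one]
  mul_mem' {σ τ} hσ hτ γ := by
    calc γ • η (σ * τ) = γ • η σ * (γ * σ * γ⁻¹) • γ • η τ := by
          rw [hη, smul_mul', smul_smul, smul_smul, inv_mul_cancel_right]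
      _ = η (γ * σ * γ⁻¹ * (γ * τ * γ⁻¹)) := by rw [hσ, hτ, ← hη]
      _ = η (γ * (σ * τ) * γ⁻¹) := by group
  inv_mem' {σ} hσ γ := by
    rw [hη.map_inv, show γ * σ⁻¹ * γ⁻¹ = (γ * σ * γ⁻¹)⁻¹ by group, hη.map_inv, ← hσ,
      smul_inv', smul_smul, smul_smul, show (γ * σ * γ⁻¹)⁻¹ * γ = γ * σ⁻¹ by group]

instance (hη : IsCrossedHom η) : hη.equivariantSubgroup.Normal :=
  ⟨fun σ hσ τ γ => by
    rw [← hσ τ, smul_smul, hσ (γ * τ), show γ * τ * σ * (γ * τ)⁻¹ = γ * (τ * σ * τ⁻¹) * γ⁻¹ by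
      group]⟩

theorem isClosed_equivariantSubgroup [TopologicalSpace Γ] [ContinuousMul Γ]
    [TopologicalSpace 𝔊] [ContinuousConstSMul Γ 𝔊] [T2Space 𝔊] (hη : IsCrossedHom η)
    (hc : Continuous η) : IsClosed (hη.equivariantSubgroup : Set Γ) := by
  change IsClosed {σ | ∀ γ : Γ, γ • η σ = η (γ * σ * γ⁻¹)}
  rw [Set.ofPred_forall]
  exact isClosed_iInter fun γ => isClosed_eq (hc.const_smul γ)
    (hc.comp ((continuous_const_mul γ).mul continuous_const))

theorem mem_equivariantSubgroup_of_mem_ker_of_mem_center (hη : IsCrossedHom η) {σ : Γ}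
    (hσ : σ ∈ (toMulAut Γ 𝔊).ker) (hc : η σ ∈ Subgroup.center 𝔊) :
    σ ∈ hη.equivariantSubgroup := fun γ => by
  rw [hη.map_conj_of_mem_ker hσ,
    Subgroup.mem_center_iff.mp (smul_mem_center γ hc) (η γ), mul_inv_cancel_right]

/-- `Δ̄ = Δ' ∩ Δ''`. -/
def fixedEquivariantSubgroup (hη : IsCrossedHom η) : Subgroup Γ :=
  (toMulAut Γ 𝔊).ker ⊓ hη.equivariantSubgroup

instance (hη : IsCrossedHom η) : hη.fixedEquivariantSubgroup.Normal :=
  Subgroup.normal_inf_normal _ _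

theorem fixedEquivariantSubgroup_le_ker (hη : IsCrossedHom η) :
    hη.fixedEquivariantSubgroup ≤ (toMulAut Γ 𝔊).ker :=
  inf_le_left

theorem commute_map_of_mem_fixedEquivariantSubgroup (hη : IsCrossedHom η) {σ : Γ}
    (hσ : σ ∈ hη.fixedEquivariantSubgroup) (τ : Γ) : Commute (η τ) (η σ) := by
  have hconj : τ • η (τ⁻¹ * σ * τ) = η σ := by
    have h := hσ.2 τ⁻¹
    rw [inv_inv] at h
    rw [← h, smul_inv_smul]
  calc η τ * η σ = η (τ * (τ⁻¹ * σ * τ)) := by rw [hη, hconj]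
    _ = η σ * η τ := by rw [show τ * (τ⁻¹ * σ * τ) = σ * τ by group, hη.map_mul_of_mem_ker hσ.1]

theorem ker_toMulAut_le_equivariantSubgroup (hη : IsCrossedHom η)
    (hcomm : ∀ a b : 𝔊, a * b = b * a) : (toMulAut Γ 𝔊).ker ≤ hη.equivariantSubgroup :=
  fun _ hσ => hη.mem_equivariantSubgroup_of_mem_ker_of_mem_center hσ
    (Subgroup.mem_center_iff.mpr fun g => hcomm g _)

theorem isClosed_fixedEquivariantSubgroup [TopologicalSpace Γ] [ContinuousMul Γ]
    [TopologicalSpace 𝔊] [ContinuousSMul Γ 𝔊] [T2Space 𝔊] (hη : IsCrossedHom η)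
    (hc : Continuous η) : IsClosed (hη.fixedEquivariantSubgroup : Set Γ) :=
  isClosed_ker_toMulAut.inter (hη.isClosed_equivariantSubgroup hc)

def restrictHom (hη : IsCrossedHom η) (H : Subgroup Γ) (hH : H ≤ (toMulAut Γ 𝔊).ker) :
    H →* 𝔊 :=
  MonoidHom.mk' (fun x => η x) fun x y => hη.map_mul_of_mem_ker (hH x.2) y

theorem coe_range_restrictHom (hη : IsCrossedHom η) (H : Subgroup Γ)
    (hH : H ≤ (toMulAut Γ 𝔊).ker) : ((hη.restrictHom H hH).range : Set 𝔊) = η '' H :=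
  Set.ext fun _ => ⟨fun ⟨x, hx⟩ => ⟨x, x.2, hx⟩, fun ⟨σ, hσ, hx⟩ => ⟨⟨σ, hσ⟩, hx⟩⟩

variable [TopologicalSpace 𝔊] [IsTopologicalGroup 𝔊] [T2Space 𝔊]

theorem map_mem_center (hη : IsCrossedHom η)
    (hgen : (Subgroup.closure (Set.range η)).topologicalClosure = ⊤) {σ : Γ}
    (hσ : σ ∈ hη.fixedEquivariantSubgroup) : η σ ∈ Subgroup.center 𝔊 :=
  Subgroup.mem_center_of_forall_commute hgen <| by
    rintro _ ⟨τ, rfl⟩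
    exact hη.commute_map_of_mem_fixedEquivariantSubgroup hσ τ

theorem coe_fixedEquivariantSubgroup (hη : IsCrossedHom η)
    (hgen : (Subgroup.closure (Set.range η)).topologicalClosure = ⊤) :
    (hη.fixedEquivariantSubgroup : Set Γ) =
      ((toMulAut Γ 𝔊).ker : Set Γ) ∩ η ⁻¹' (Subgroup.center 𝔊 : Set 𝔊) :=
  Set.ext fun _ => ⟨fun hσ => ⟨hσ.1, hη.map_mem_center hgen hσ⟩,
    fun ⟨h1, h2⟩ => ⟨h1, hη.mem_equivariantSubgroup_of_mem_ker_of_mem_center h1 h2⟩⟩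

theorem range_restrictHom_le_center (hη : IsCrossedHom η)
    (hgen : (Subgroup.closure (Set.range η)).topologicalClosure = ⊤) :
    (hη.restrictHom _ hη.fixedEquivariantSubgroup_le_ker).range ≤ Subgroup.center 𝔊 := by
  rintro _ ⟨σ, rfl⟩
  exact hη.map_mem_center hgen σ.2

theorem isIdealSG_range_restrictHom [TopologicalSpace Γ] [CompactSpace Γ] [ContinuousMul Γ]
    [ContinuousSMul Γ 𝔊] (hη : IsCrossedHom η) (hc : Continuous η)
    (hgen : (Subgroup.closure (Set.range η)).topologicalClosure = ⊤) :
    IsIdealSG Γ (hη.restrictHom _ hη.fixedEquivariantSubgroup_le_ker).range := by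
  refine ⟨?_, Subgroup.normal_of_le_center (hη.range_restrictHom_le_center hgen), ?_⟩
  · rw [coe_range_restrictHom]
    exact ((hη.isClosed_fixedEquivariantSubgroup hc).isCompact.image hc).isClosed
  · rintro γ _ ⟨σ, rfl⟩
    exact ⟨⟨_, Subgroup.Normal.conj_mem inferInstance σ.1 σ.2 γ⟩, (σ.2.2 γ).symm⟩

end IsCrossedHom

theorem generating_cocycle_properties_general
    {Γ 𝔊 : Type*} [Group Γ] [TopologicalSpace Γ] [IsTopologicalGroup Γ]
    [CompactSpace Γ] [Group 𝔊] [TopologicalSpace 𝔊] [IsTopologicalGroup 𝔊] [T2Space 𝔊]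
    [MulDistribMulAction Γ 𝔊] [ContinuousSMul Γ 𝔊]
    (η : Γ → 𝔊) (hcont : Continuous η)
    (hcoc : ∀ σ τ : Γ, η (σ * τ) = η σ * σ • η τ)
    (hgen : (Subgroup.closure (Set.range η)).topologicalClosure = ⊤)
    (Δ Δ' Δ'' Δbar Δtilde : Set Γ)
    (hΔ : Δ = η ⁻¹' {1})
    (hΔ' : Δ' = {γ : Γ | ∀ g : 𝔊, γ • g = g})
    (hΔ'' : Δ'' = {σ : Γ | ∀ γ : Γ, γ • η σ = η (γ * σ * γ⁻¹)})
    (hΔbar : Δbar = Δ' ∩ Δ'')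
    (hΔtilde : Δtilde = Δ ∩ Δ') :
    -- (1)
    ((∃ N : Subgroup Γ, (N : Set Γ) = Δ'' ∧ N.Normal ∧ IsClosed (N : Set Γ)) ∧
      (∀ Λ : Subgroup Γ, Λ.Normal → IsClosed (Λ : Set Γ) →
        (∀ σ ∈ Λ, ∀ γ : Γ, η (γ * σ * γ⁻¹) = γ • η σ) → (Λ : Set Γ) ⊆ Δ'') ∧
      (∃ Nb : Subgroup Γ, (Nb : Set Γ) = Δbar ∧ Nb.Normal ∧ IsClosed (Nb : Set Γ)) ∧
      Δtilde ⊆ Δbar) ∧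
    -- (2)
    ((∀ a b : 𝔊, a * b = b * a) → Δ' ⊆ Δ'' ∧ Δbar = Δ') ∧
    -- (3)
    (∃ H : Subgroup 𝔊, (H : Set 𝔊) = η '' Δbar ∧ H ≤ Subgroup.center 𝔊 ∧
      ((cogalJ Γ η Δbar : Subgroup 𝔊) : Set 𝔊) = η '' Δbar ∧ IsIdealSG Γ H) ∧
    -- (4)
    (Δbar = Δ' ∩ η ⁻¹' ((Subgroup.center 𝔊 : Subgroup 𝔊) : Set 𝔊)) ∧
    -- (5)
    (∃ N : Subgroup Γ, (N : Set Γ) = Δbar ∧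
      ∃ M : Subgroup N, ((M : Set N) = {x : N | (x : Γ) ∈ Δtilde}) ∧
        ∃ H : Subgroup 𝔊, (H : Set 𝔊) = η '' Δbar ∧
          ∃ e : (N ⧸ M) ≃ₜ H,
            (∀ x : N, ((e (QuotientGroup.mk x) : H) : 𝔊) = η (x : Γ)) ∧
            (∀ x y : N, ((e (QuotientGroup.mk (x * y)) : H) : 𝔊) =
              ((e (QuotientGroup.mk x) : H) : 𝔊) * ((e (QuotientGroup.mk y) : H) : 𝔊))) := by
  have hη : IsCrossedHom η := hcoc
  obtain rfl : Δ' = (toMulAut Γ 𝔊).ker := hΔ'.trans coe_ker_toMulAut.symm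
  obtain rfl : Δ'' = hη.equivariantSubgroup := hΔ''
  obtain rfl : Δbar = hη.fixedEquivariantSubgroup := hΔbar
  subst hΔ hΔtilde
  set f := hη.restrictHom _ hη.fixedEquivariantSubgroup_le_ker
  have hrange : (f.range : Set 𝔊) = η '' hη.fixedEquivariantSubgroup :=
    hη.coe_range_restrictHom _ _
  have hideal : IsIdealSG Γ f.range := hη.isIdealSG_range_restrictHom hcont hgen
  have : CompactSpace hη.fixedEquivariantSubgroup :=
    isCompact_iff_compactSpace.mp (hη.isClosed_fixedEquivariantSubgroup hcont).isCompact
  refine ⟨⟨⟨_, rfl, inferInstance, hη.isClosed_equivariantSubgroup hcont⟩,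
      fun Λ _ _ hΛ σ hσ γ => (hΛ σ hσ γ).symm,
      ⟨_, rfl, inferInstance, hη.isClosed_fixedEquivariantSubgroup hcont⟩,
      fun σ ⟨h1, h2⟩ => ⟨h2, hη.mem_equivariantSubgroup_of_mem_ker_of_mem_center h2
        (Set.mem_singleton_iff.mp h1 ▸ one_mem _)⟩⟩,
    fun hab => ⟨hη.ker_toMulAut_le_equivariantSubgroup hab,
      congrArg SetLike.coe (inf_eq_left.mpr (hη.ker_toMulAut_le_equivariantSubgroup hab))⟩,
    ⟨f.range, hrange, hη.range_restrictHom_le_center hgen,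
      by rw [cogalJ_eq_of_isIdealSG hideal hrange, hrange], hideal⟩,
    hη.coe_fixedEquivariantSubgroup hgen,
    ⟨_, rfl, f.ker, Set.ext fun x => ⟨fun h => ⟨h, x.2.1⟩, And.left⟩, f.range, hrange,
      f.quotientKerHomeomorphRange (hcont.comp continuous_subtype_val), fun _ => rfl,
      fun x y => map_mul f x y⟩⟩

/-- Properties of a generating cocycle `η : Γ → 𝔊`, where
`Δ = ker η`, `Δ' = Fix_Γ(𝔊)`, `Δ'' = {σ | ∀ γ, γ • η σ = η (γσγ⁻¹)}`, `Δ̄ = Δ' ∩ Δ''`,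
`Δ̃ = Δ ∩ Δ'`:
(1) `Δ''` is the carrier of a closed normal subgroup of `Γ`, and it is the largest closed
normal subgroup `Λ` such that `η (γσγ⁻¹) = γ • η σ` for all `σ ∈ Λ`, `γ ∈ Γ`; in particular
`Δ̄` carries a closed normal subgroup containing `Δ̃`;
(2) if `𝔊` is abelian then `Δ' ⊆ Δ''`, so `Δ̄ = Δ'`;
(3) `η(Δ̄)` is (the carrier of) a subgroup of `𝔊` contained in the center, equal to `J(Δ̄)`,
hence an ideal of `𝔊`;
(4) `Δ̄ = Δ' ∩ η⁻¹(C(𝔊))`;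
(5) `η` restricts to an isomorphism of topological groups `Δ̄/Δ̃ ≅ η(Δ̄)`. -/
theorem generating_cocycle_properties
    {Γ 𝔊 : Type*} [Group Γ] [TopologicalSpace Γ] [IsTopologicalGroup Γ]
    [CompactSpace Γ] [T2Space Γ] [TotallyDisconnectedSpace Γ]
    [Group 𝔊] [TopologicalSpace 𝔊] [IsTopologicalGroup 𝔊]
    [CompactSpace 𝔊] [T2Space 𝔊] [TotallyDisconnectedSpace 𝔊]
    [MulDistribMulAction Γ 𝔊] [ContinuousSMul Γ 𝔊]
    (η : Γ → 𝔊) (hcont : Continuous η)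
    (hcoc : ∀ σ τ : Γ, η (σ * τ) = η σ * σ • η τ)
    (hgen : (Subgroup.closure (Set.range η)).topologicalClosure = ⊤)
    (Δ Δ' Δ'' Δbar Δtilde : Set Γ)
    (hΔ : Δ = η ⁻¹' {1})
    (hΔ' : Δ' = {γ : Γ | ∀ g : 𝔊, γ • g = g})
    (hΔ'' : Δ'' = {σ : Γ | ∀ γ : Γ, γ • η σ = η (γ * σ * γ⁻¹)})
    (hΔbar : Δbar = Δ' ∩ Δ'')
    (hΔtilde : Δtilde = Δ ∩ Δ') :
    -- (1)
    ((∃ N : Subgroup Γ, (N : Set Γ) = Δ'' ∧ N.Normal ∧ IsClosed (N : Set Γ)) ∧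
      (∀ Λ : Subgroup Γ, Λ.Normal → IsClosed (Λ : Set Γ) →
        (∀ σ ∈ Λ, ∀ γ : Γ, η (γ * σ * γ⁻¹) = γ • η σ) → (Λ : Set Γ) ⊆ Δ'') ∧
      (∃ Nb : Subgroup Γ, (Nb : Set Γ) = Δbar ∧ Nb.Normal ∧ IsClosed (Nb : Set Γ)) ∧
      Δtilde ⊆ Δbar) ∧
    -- (2)
    ((∀ a b : 𝔊, a * b = b * a) → Δ' ⊆ Δ'' ∧ Δbar = Δ') ∧
    -- (3)
    (∃ H : Subgroup 𝔊, (H : Set 𝔊) = η '' Δbar ∧ H ≤ Subgroup.center 𝔊 ∧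
      ((cogalJ Γ η Δbar : Subgroup 𝔊) : Set 𝔊) = η '' Δbar ∧ IsIdealSG Γ H) ∧
    -- (4)
    (Δbar = Δ' ∩ η ⁻¹' ((Subgroup.center 𝔊 : Subgroup 𝔊) : Set 𝔊)) ∧
    -- (5)
    (∃ N : Subgroup Γ, (N : Set Γ) = Δbar ∧
      ∃ M : Subgroup N, ((M : Set N) = {x : N | (x : Γ) ∈ Δtilde}) ∧
        ∃ H : Subgroup 𝔊, (H : Set 𝔊) = η '' Δbar ∧
          ∃ e : (N ⧸ M) ≃ₜ H,
            (∀ x : N, ((e (QuotientGroup.mk x) : H) : 𝔊) = η (x : Γ)) ∧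
            (∀ x y : N, ((e (QuotientGroup.mk (x * y)) : H) : 𝔊) =
              ((e (QuotientGroup.mk x) : H) : 𝔊) * ((e (QuotientGroup.mk y) : H) : 𝔊))) :=
  generating_cocycle_properties_general η hcont hcoc hgen Δ Δ' Δ'' Δbar Δtilde hΔ hΔ' hΔ'' hΔbar
    hΔtilde
end

section
/- Let η : Γ → 𝔊 be a generating cocycle. Then the following are equivalent: (1) η is surjective; (2) there exists a closed subgroup Λ of Γ such that a := η(Λ) is an ideal of 𝔊 and the induced cocycle η_a : Γ → 𝔊/a is surjective. -/
/-! One direction is witnessed by `Λ = Γ`, `a = 𝔊`. Conversely, if `g ≡ η γ` modulo `a`, then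
`γ⁻¹ • ((η γ)⁻¹ * g)` lies in `a ⊆ range η`, say it is `η l`, and the cocycle identity gives
`η (γ * l) = η γ * γ • η l = g`. -/

section Cocycle

variable {Γ 𝔊 : Type*} [Group Γ] [Group 𝔊]

def IsCocycle [SMul Γ 𝔊] (η : Γ → 𝔊) : Prop :=
  ∀ σ τ : Γ, η (σ * τ) = η σ * σ • η τ

theorem IsCocycle.surjective_of_surjective_mk [MulAction Γ 𝔊] {η : Γ → 𝔊} (hη : IsCocycle η)
    {a : Subgroup 𝔊} (ha_smul : ∀ (γ : Γ) (g : 𝔊), g ∈ a → γ • g ∈ a)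
    (ha_range : (a : Set 𝔊) ⊆ Set.range η)
    (hq : Function.Surjective fun γ : Γ => (QuotientGroup.mk (η γ) : 𝔊 ⧸ a)) :
    Function.Surjective η := by
  intro g
  obtain ⟨γ, hγ⟩ := hq g
  have hdiff : (η γ)⁻¹ * g ∈ a := QuotientGroup.eq.mp hγ
  obtain ⟨l, hl⟩ := ha_range (ha_smul γ⁻¹ _ hdiff)
  refine ⟨γ * l, ?_⟩
  rw [hη, hl, smul_inv_smul, mul_inv_cancel_left]

end Cocycle

theorem isIdealSG_top (Γ : Type*) {𝔊 : Type*} [Group 𝔊] [TopologicalSpace 𝔊] [SMul Γ 𝔊] :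
    IsIdealSG Γ (⊤ : Subgroup 𝔊) :=
  ⟨isClosed_univ, inferInstance, fun _ _ _ => trivial⟩

theorem surjective_of_exists_ideal_image_general
    {Γ 𝔊 : Type*} [Group Γ] [TopologicalSpace Γ]
    [Group 𝔊] [TopologicalSpace 𝔊]
    [MulDistribMulAction Γ 𝔊]
    (η : Γ → 𝔊)
    (hcoc : ∀ σ τ : Γ, η (σ * τ) = η σ * σ • η τ) :
    Function.Surjective η ↔
      ∃ Λ : Subgroup Γ, IsClosed (Λ : Set Γ) ∧
        ∃ a : Subgroup 𝔊, (a : Set 𝔊) = η '' (Λ : Set Γ) ∧ IsIdealSG Γ a ∧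
          Function.Surjective (fun γ : Γ => (QuotientGroup.mk (η γ) : 𝔊 ⧸ a)) := by
  constructor
  · intro hsurj
    refine ⟨⊤, isClosed_univ, ⊤, ?_, isIdealSG_top Γ, QuotientGroup.mk_surjective.comp hsurj⟩
    rw [Subgroup.coe_top, Subgroup.coe_top, Set.image_univ, hsurj.range_eq]
  · rintro ⟨Λ, -, a, ha, ⟨-, -, ha_smul⟩, hq⟩
    exact IsCocycle.surjective_of_surjective_mk hcoc ha_smul (ha ▸ Set.image_subset_range _ _) hq

/-- Surjectivity criterion for generating cocycles: a generating cocycle `η : Γ → 𝔊` is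
surjective if and only if there exists a closed subgroup `Λ` of `Γ` such that `a := η(Λ)`
is an ideal of `𝔊` and the induced cocycle `η_a : Γ → 𝔊/a` is surjective. -/
theorem surjective_of_exists_ideal_image
    {Γ 𝔊 : Type*} [Group Γ] [TopologicalSpace Γ] [IsTopologicalGroup Γ]
    [CompactSpace Γ] [T2Space Γ] [TotallyDisconnectedSpace Γ]
    [Group 𝔊] [TopologicalSpace 𝔊] [IsTopologicalGroup 𝔊]
    [CompactSpace 𝔊] [T2Space 𝔊] [TotallyDisconnectedSpace 𝔊]
    [MulDistribMulAction Γ 𝔊] [ContinuousSMul Γ 𝔊]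
    (η : Γ → 𝔊) (hcont : Continuous η)
    (hcoc : ∀ σ τ : Γ, η (σ * τ) = η σ * σ • η τ)
    (hgen : (Subgroup.closure (Set.range η)).topologicalClosure = ⊤) :
    Function.Surjective η ↔
      ∃ Λ : Subgroup Γ, IsClosed (Λ : Set Γ) ∧
        ∃ a : Subgroup 𝔊, (a : Set 𝔊) = η '' (Λ : Set Γ) ∧ IsIdealSG Γ a ∧
          Function.Surjective (fun γ : Γ => (QuotientGroup.mk (η γ) : 𝔊 ⧸ a)) :=
  surjective_of_exists_ideal_image_general η hcoc
end

section
/- Let n ≥ 2 be an integer and let 𝒫_n be the set consisting of the odd primes dividing n, together with 2 in case 4 divides n. For a unit u of ℤ/nℤ let r_u := gcd(n, ũ − 1), where ũ ∈ ℤ is any representative of u (this gcd is well defined), for p ∈ 𝒫_n let u_p be the image of u in (ℤ/p^{v_p(n)}ℤ)^× and o(u_p) its multiplicative order, where v_p denotes the p-adic valuation. Then u^{r_u} = 1 in ℤ/nℤ if and only if all of the following hold: (i) r_u ≠ 1; (ii) for every p ∈ 𝒫_{r_u}, v_p(n) ≤ 2·v_p(r_u); (iii) for every odd prime p ∈ 𝒫_n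 \ 𝒫_{r_u}, 2 ≤ o(u_p) and o(u_p) divides gcd(r_u, p−1); (iv) if 2 ∈ 𝒫_n \ 𝒫_{r_u}, then ũ ≡ −1 (mod 2^{v_2(n)−1}). -/
/-!
The equation `u ^ r = 1` is local: it says `p ^ v_p(n) ∣ ũ ^ r - 1` for each prime `p ∣ n`, and
`v_p(r) = min(v_p(n), v_p(ũ - 1))`.
If `p ∈ 𝒫_r`, lifting the exponent gives `v_p(ũ ^ r - 1) = v_p(ũ - 1) + v_p(r)`, so the local
condition reads `v_p(n) ≤ 2 v_p(r)`. If `p` is odd and `p ∤ ũ - 1`, then `p ∤ r`, so the order of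
`u_p` divides `r` iff it divides `gcd(r, p - 1)`, the prime-to-`p` part of `φ(p ^ v_p(n))`; and
`u_p ≠ 1`. If `4 ∣ n` but `4 ∤ ũ - 1`, then `v_2(r) = 1` and the `2`-adic lifting the exponent
gives `v_2(ũ ^ r - 1) = v_2(ũ + 1) + 1`. At `p = 2` with `4 ∤ n` the condition is automatic since
`ũ` is odd. Finally `r = 1` together with `u ^ r = 1` would force `u = 1`, hence `r = n`.
-/

/-- `PsetAd m` is the set `𝒫_m` of odd prime divisors of `m`, together with `2` in case
`4 ∣ m`. -/
def PsetAd (m : ℕ) : Set ℕ :=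
  {p : ℕ | p.Prime ∧ p ∣ m ∧ (p ≠ 2 ∨ 4 ∣ m)}

theorem emultiplicity_gcd {α : Type*} [CommMonoidWithZero α] [GCDMonoid α] (a b c : α) :
    emultiplicity a (gcd b c) = min (emultiplicity a b) (emultiplicity a c) :=
  ENat.eq_of_forall_natCast_le_iff fun k => by
    simp only [le_min_iff, ← pow_dvd_iff_le_emultiplicity, dvd_gcd_iff]

theorem Nat.emultiplicity_eq_factorization {n p : ℕ} (hp : p.Prime) (hn : n ≠ 0) :
    emultiplicity p n = n.factorization p := by
  have := Fact.mk hp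
  rw [← padicValNat_eq_emultiplicity hn, Nat.factorization_def n hp]

theorem Int.natCast_dvd_iff_forall_prime_pow_factorization_dvd {n : ℕ} (hn : n ≠ 0) (z : ℤ) :
    (n : ℤ) ∣ z ↔ ∀ p : ℕ, p.Prime → p ∣ n → (p : ℤ) ^ n.factorization p ∣ z := by
  refine ⟨fun h p _ _ => (Int.natCast_dvd_natCast.2 (Nat.ordProj_dvd n p)).trans
    (by exact_mod_cast h), fun h => ?_⟩
  rcases eq_or_ne z 0 with rfl | hz
  · exact dvd_zero _
  have hz' : z.natAbs ≠ 0 := Int.natAbs_ne_zero.2 hz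
  rw [Int.natCast_dvd, ← Nat.factorization_prime_le_iff_dvd hn hz']
  intro p hp
  by_cases hpn : p ∣ n
  · rw [← hp.pow_dvd_iff_le_factorization hz', ← Int.natCast_dvd]
    exact_mod_cast h p hp hpn
  · simp [Nat.factorization_eq_zero_of_not_dvd hpn]

theorem ZMod.unit_pow_eq_one_iff_dvd {n : ℕ} {u : (ZMod n)ˣ} {x : ℤ} (hx : (x : ZMod n) = u)
    (r : ℕ) : u ^ r = 1 ↔ (n : ℤ) ∣ x ^ r - 1 := by
  rw [Units.ext_iff, Units.val_pow_eq_pow_val, ← hx, Units.val_one, ← Int.cast_pow,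
    ← Int.cast_one, ZMod.intCast_eq_intCast_iff_dvd_sub, dvd_sub_comm]

theorem ZMod.intCast_eq_unitsMap_castHom {m n : ℕ} (h : m ∣ n) {u : (ZMod n)ˣ} {x : ℤ}
    (hx : (x : ZMod n) = u) :
    (x : ZMod m) = Units.map (ZMod.castHom h (ZMod m)).toMonoidHom u := by
  simp [← hx]

theorem ZMod.not_dvd_of_intCast_eq_unit {n p : ℕ} (hp : p.Prime) (hpn : p ∣ n)
    {u : (ZMod n)ˣ} {x : ℤ} (hx : (x : ZMod n) = u) : ¬ (p : ℤ) ∣ x := by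
  have := Fact.mk hp
  intro hpx
  have hunit : IsUnit (x : ZMod p) :=
    ZMod.intCast_eq_unitsMap_castHom hpn hx ▸ Units.isUnit _
  rw [(ZMod.intCast_zmod_eq_zero_iff_dvd x p).2 hpx] at hunit
  exact not_isUnit_zero hunit

theorem ZMod.orderOf_unit_dvd_sub_one {p e : ℕ} (hp : p.Prime) (he : e ≠ 0)
    {U : (ZMod (p ^ e))ˣ} (hU : ¬ p ∣ orderOf U) : orderOf U ∣ p - 1 := by
  have : NeZero (p ^ e) := ⟨pow_ne_zero _ hp.ne_zero⟩
  have hcard : orderOf U ∣ p ^ (e - 1) * (p - 1) := by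
    rw [← Nat.totient_prime_pow hp (Nat.pos_of_ne_zero he), ← ZMod.card_units_eq_totient]
    exact orderOf_dvd_card
  exact (((hp.coprime_iff_not_dvd.2 hU).symm).pow_right _).dvd_of_dvd_mul_left hcard

theorem Int.emultiplicity_pow_sub_one {p : ℕ} (hp : p.Prime) {x : ℤ} (hpx : (p : ℤ) ∣ x - 1)
    (h : p ≠ 2 ∨ 4 ∣ x - 1) (r : ℕ) :
    emultiplicity (p : ℤ) (x ^ r - 1) = emultiplicity (p : ℤ) (x - 1) + emultiplicity p r := by
  have hx : ¬ (p : ℤ) ∣ x := fun hdvd =>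
    hp.not_dvd_one (Int.natCast_dvd_natCast.1 (by simpa using dvd_sub hdvd hpx))
  rcases eq_or_ne p 2 with rfl | hp2
  · have h2 := Int.natCast_emultiplicity 2 r
    push_cast at h2 hx
    simpa [← h2] using Int.two_pow_sub_pow' r (h.resolve_left (not_not_intro rfl)) hx
  · simpa using Int.emultiplicity_pow_sub_pow hp (hp.odd_of_ne_two hp2) hpx hx r

theorem ENat.coe_le_add_iff_le_two_mul_of_min_eq {e k : ℕ} {a : ℕ∞} (h : min (e : ℕ∞) a = k) :
    (e : ℕ∞) ≤ a + k ↔ e ≤ 2 * k := by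
  induction a using ENat.recTopCoe with
  | top =>
    rw [min_top_right, ENat.natCast_inj] at h
    simp only [top_add, le_top, true_iff]
    omega
  | coe a =>
    replace h : min e a = k := ENat.natCast_inj.1 h
    norm_cast
    omega

theorem Int.two_pow_succ_dvd_pow_sub_one_iff {x : ℤ} (hx : Odd x) (hx4 : ¬ 4 ∣ x - 1) {r : ℕ}
    (hr : 2 ∣ r) (hr4 : ¬ 4 ∣ r) (e : ℕ) : (2 : ℤ) ^ (e + 1) ∣ x ^ r - 1 ↔ (2 : ℤ) ^ e ∣ x + 1 := by
  have hx2 : (2 : ℤ) ∣ x - 1 := (hx.sub_odd odd_one).two_dvd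
  have hx1 : emultiplicity (2 : ℤ) (x - 1) = 1 := by
    simpa using (emultiplicity_eq_coe (n := 1)).2 ⟨by rwa [pow_one], by norm_num [hx4]⟩
  have hr1 : emultiplicity (2 : ℤ) r = 1 := by
    have hr4' : ¬ (4 : ℤ) ∣ r := by exact_mod_cast hr4
    simpa using (emultiplicity_eq_coe (n := 1)).2 ⟨by rw [pow_one]; exact_mod_cast hr,
      by norm_num [hr4']⟩
  have lte := Int.two_pow_sub_pow (y := 1) hx2 (Int.not_even_iff_odd.2 hx ∘ even_iff_two_dvd.2)
    (even_iff_two_dvd.2 hr)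
  rw [one_pow, hx1, hr1] at lte
  rw [pow_dvd_iff_le_emultiplicity, pow_dvd_iff_le_emultiplicity,
    WithTop.add_right_cancel ENat.one_ne_top lte, Nat.cast_succ,
    ENat.add_le_add_iff_right ENat.one_ne_top]

theorem mem_PsetAd_gcd_iff {n p : ℕ} {z : ℤ} :
    p ∈ PsetAd (Int.gcd n z) ↔ p ∈ PsetAd n ∧ (p : ℤ) ∣ z ∧ (p ≠ 2 ∨ 4 ∣ z) := by
  have hdvd (d : ℕ) : d ∣ Int.gcd n z ↔ d ∣ n ∧ (d : ℤ) ∣ z := by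
    rw [← Int.natCast_dvd_natCast, Int.coe_gcd, dvd_gcd_iff, Int.natCast_dvd_natCast]
  simp only [PsetAd, Set.mem_ofPred_eq, hdvd]
  tauto

theorem pow_factorization_dvd_pow_gcd_sub_one_iff {n p : ℕ} (hp : p.Prime) (hn : n ≠ 0) {x : ℤ}
    (hpx : (p : ℤ) ∣ x - 1) (h : p ≠ 2 ∨ 4 ∣ x - 1) :
    (p : ℤ) ^ n.factorization p ∣ x ^ Int.gcd n (x - 1) - 1 ↔
      n.factorization p ≤ 2 * (Int.gcd n (x - 1)).factorization p := by
  have hr : Int.gcd n (x - 1) ≠ 0 := Int.gcd_ne_zero_left (by exact_mod_cast hn)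
  have hmin : min (n.factorization p : ℕ∞) (emultiplicity (p : ℤ) (x - 1)) =
      (Int.gcd n (x - 1)).factorization p := by
    rw [← Nat.emultiplicity_eq_factorization hp hn, ← Nat.emultiplicity_eq_factorization hp hr,
      ← Int.natCast_emultiplicity, ← Int.natCast_emultiplicity, Int.coe_gcd, emultiplicity_gcd]
  rw [pow_dvd_iff_le_emultiplicity, Int.emultiplicity_pow_sub_one hp hpx h,
    Nat.emultiplicity_eq_factorization hp hr]
  exact ENat.coe_le_add_iff_le_two_mul_of_min_eq hmin

theorem ZMod.prime_pow_dvd_pow_sub_one_iff_orderOf {p e r : ℕ} (hp : p.Prime) (he : e ≠ 0)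
    {U : (ZMod (p ^ e))ˣ} {x : ℤ} (hx : (x : ZMod (p ^ e)) = U) (hpx : ¬ (p : ℤ) ∣ x - 1)
    (hrx : (r : ℤ) ∣ x - 1) :
    (p : ℤ) ^ e ∣ x ^ r - 1 ↔ 2 ≤ orderOf U ∧ orderOf U ∣ r.gcd (p - 1) := by
  have : NeZero (p ^ e) := ⟨pow_ne_zero _ hp.ne_zero⟩
  have hpow (s : ℕ) : U ^ s = 1 ↔ (p : ℤ) ^ e ∣ x ^ s - 1 := by
    rw [ZMod.unit_pow_eq_one_iff_dvd hx, Nat.cast_pow]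
  have hU : orderOf U ≠ 1 := fun h => hpx <| (dvd_pow_self _ he).trans <| by
    simpa using (hpow 1).1 (by rw [pow_one, ← orderOf_eq_one_iff, h])
  rw [← hpow, ← orderOf_dvd_iff_pow_eq_one]
  refine ⟨fun hr => ⟨?_, Nat.dvd_gcd hr (ZMod.orderOf_unit_dvd_sub_one hp he fun hpU => hpx ?_)⟩,
    fun h => h.2.trans (Nat.gcd_dvd_left _ _)⟩
  · have := orderOf_pos U
    omega
  · exact (Int.natCast_dvd_natCast.2 (hpU.trans hr)).trans hrx

theorem two_pow_factorization_dvd_pow_gcd_sub_one_iff {n : ℕ} (hn : n ≠ 0) (h2n : 2 ∣ n) {x : ℤ}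
    (hx : Odd x) (hx4 : ¬ 4 ∣ x - 1) :
    (2 : ℤ) ^ n.factorization 2 ∣ x ^ Int.gcd n (x - 1) - 1 ↔
      (x : ZMod (2 ^ (n.factorization 2 - 1))) = -1 := by
  obtain ⟨e, he⟩ : ∃ e, n.factorization 2 = e + 1 :=
    Nat.exists_eq_add_one_of_ne_zero (Nat.prime_two.factorization_pos_of_dvd hn h2n).ne'
  have hr2 : 2 ∣ Int.gcd n (x - 1) :=
    Int.dvd_gcd (by exact_mod_cast h2n) (hx.sub_odd odd_one).two_dvd
  have hr4 : ¬ 4 ∣ Int.gcd n (x - 1) := fun h =>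
    hx4 ((Int.natCast_dvd_natCast.2 h).trans (Int.gcd_dvd_right _ _))
  rw [he, Nat.add_sub_cancel, Int.two_pow_succ_dvd_pow_sub_one_iff hx hx4 hr2 hr4,
    eq_neg_iff_add_eq_zero]
  exact_mod_cast (ZMod.intCast_zmod_eq_zero_iff_dvd (x + 1) (2 ^ e)).symm

theorem two_pow_factorization_dvd_pow_sub_one_of_not_four_dvd {n : ℕ} (hn : ¬ 4 ∣ n) {x : ℤ}
    (hx : Odd x) (r : ℕ) : (2 : ℤ) ^ n.factorization 2 ∣ x ^ r - 1 := by
  have he : n.factorization 2 ≤ 1 := by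
    by_contra! h
    exact hn ((pow_dvd_pow 2 h).trans (Nat.ordProj_dvd n 2))
  exact (pow_dvd_pow 2 he).trans (by simpa using (hx.pow.sub_odd odd_one).two_dvd)

theorem gcd_sub_one_ne_one_of_pow_eq_one {n : ℕ} (hn : 2 ≤ n) {u : (ZMod n)ˣ} {x : ℤ}
    (hx : (x : ZMod n) = u) (h : u ^ Int.gcd n (x - 1) = 1) : Int.gcd n (x - 1) ≠ 1 := by
  intro h1
  rw [h1, ZMod.unit_pow_eq_one_iff_dvd hx, pow_one] at h
  rw [Int.gcd_eq_natAbs_left_iff_dvd.2 h, Int.natAbs_natCast] at h1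
  omega

/-- Characterization of the units `u` of `ℤ/nℤ` satisfying `u^{r_u} = 1`, where
`r_u = gcd(n, ũ − 1)` for a representative `ũ ∈ ℤ` of `u` (these units correspond to the
adequate self-actions of the cyclic group `ℤ/nℤ`): writing `u_p` for the image of `u` in
`(ℤ/p^{v_p(n)}ℤ)^×` and `o(u_p)` for its order, `u^{r_u} = 1` holds if and only if
(i) `r_u ≠ 1`; (ii) `v_p(n) ≤ 2·v_p(r_u)` for every `p ∈ 𝒫_{r_u}`;
(iii) `2 ≤ o(u_p)` and `o(u_p) ∣ gcd(r_u, p−1)` for every odd prime `p ∈ 𝒫_n \ 𝒫_{r_u}`;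
(iv) if `2 ∈ 𝒫_n \ 𝒫_{r_u}` then `ũ ≡ −1 (mod 2^{v_2(n)−1})`. -/
theorem adequate_units_characterization
    (n : ℕ) (hn : 2 ≤ n) (u : (ZMod n)ˣ) (ut : ℤ) (hut : (ut : ZMod n) = (u : ZMod n)) :
    u ^ (Int.gcd (n : ℤ) (ut - 1)) = 1 ↔
      (Int.gcd (n : ℤ) (ut - 1) ≠ 1 ∧
       (∀ p ∈ PsetAd (Int.gcd (n : ℤ) (ut - 1)),
          n.factorization p ≤ 2 * (Int.gcd (n : ℤ) (ut - 1)).factorization p) ∧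
       (∀ p ∈ PsetAd n, p ∉ PsetAd (Int.gcd (n : ℤ) (ut - 1)) → p ≠ 2 →
          2 ≤ orderOf (Units.map (ZMod.castHom (Nat.ordProj_dvd n p)
                (ZMod (p ^ n.factorization p))).toMonoidHom u) ∧
          orderOf (Units.map (ZMod.castHom (Nat.ordProj_dvd n p)
                (ZMod (p ^ n.factorization p))).toMonoidHom u) ∣
              Nat.gcd (Int.gcd (n : ℤ) (ut - 1)) (p - 1)) ∧
       (2 ∈ PsetAd n → 2 ∉ PsetAd (Int.gcd (n : ℤ) (ut - 1)) →
          (ut : ZMod (2 ^ (n.factorization 2 - 1))) = -1)) := by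
  have hn0 : n ≠ 0 := by omega
  set r := Int.gcd (n : ℤ) (ut - 1)
  have hlocal := (ZMod.unit_pow_eq_one_iff_dvd hut r).trans
    (Int.natCast_dvd_iff_forall_prime_pow_factorization_dvd hn0 _)
  have hodd (h2n : 2 ∣ n) : Odd ut := Int.not_even_iff_odd.1 fun h =>
    ZMod.not_dvd_of_intCast_eq_unit Nat.prime_two h2n hut (by exact_mod_cast h.two_dvd)
  have hB {p} (hpn : p ∈ PsetAd n) (hpr : p ∉ PsetAd r) (hp2 : p ≠ 2) :=
    ZMod.prime_pow_dvd_pow_sub_one_iff_orderOf hpn.1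
      (hpn.1.factorization_pos_of_dvd hn0 hpn.2.1).ne'
      (ZMod.intCast_eq_unitsMap_castHom (Nat.ordProj_dvd n p) hut)
      (fun hpx => hpr (mem_PsetAd_gcd_iff.2 ⟨hpn, hpx, .inl hp2⟩))
      (Int.gcd_dvd_right (n : ℤ) (ut - 1))
  have hC (h2n : 2 ∈ PsetAd n) (h2r : 2 ∉ PsetAd r) :=
    two_pow_factorization_dvd_pow_gcd_sub_one_iff hn0 h2n.2.1 (hodd h2n.2.1) fun h4 =>
      h2r (mem_PsetAd_gcd_iff.2 ⟨h2n, (dvd_trans (by norm_num) h4), .inr h4⟩)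
  constructor
  · intro h
    have hl := hlocal.1 h
    refine ⟨gcd_sub_one_ne_one_of_pow_eq_one hn hut h, fun p hpr => ?_,
      fun p hpn hpr hp2 => (hB hpn hpr hp2).1 (hl p hpn.1 hpn.2.1),
      fun h2n h2r => (hC h2n h2r).1 (hl 2 h2n.1 h2n.2.1)⟩
    obtain ⟨hpn, hpx, hp2⟩ := mem_PsetAd_gcd_iff.1 hpr
    exact (pow_factorization_dvd_pow_gcd_sub_one_iff hpn.1 hn0 hpx hp2).1 (hl p hpn.1 hpn.2.1)
  · rintro ⟨-, hii, hiii, hiv⟩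
    refine hlocal.2 fun p hp hpn => ?_
    by_cases hpr : p ∈ PsetAd r
    · obtain ⟨-, hpx, hp2⟩ := mem_PsetAd_gcd_iff.1 hpr
      exact (pow_factorization_dvd_pow_gcd_sub_one_iff hp hn0 hpx hp2).2 (hii p hpr)
    by_cases hp2 : p = 2
    · subst hp2
      by_cases h4n : 4 ∣ n
      · exact (hC ⟨hp, hpn, .inr h4n⟩ hpr).2 (hiv ⟨hp, hpn, .inr h4n⟩ hpr)
      · exact two_pow_factorization_dvd_pow_sub_one_of_not_four_dvd h4n (hodd hpn) r
    · exact (hB ⟨hp, hpn, .inl hp2⟩ hpr hp2).2 (hiii p ⟨hp, hpn, .inl hp2⟩ hpr hp2)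
end

section
/- Let η : Γ → 𝔊 be a generating cocycle with kernel Δ, and suppose (Γ,𝔊,η) is a Kneser triple, i.e. η is surjective. Then every ideal of 𝔊 is a Kneser ideal, and S is a section of J: for every ideal a of 𝔊 one has J(S(a)) = a. -/
section cogalJ

variable {Γ 𝔊 : Type*} [Group 𝔊] [TopologicalSpace 𝔊] [SMul Γ 𝔊] {η : Γ → 𝔊} {X : Set Γ}

theorem cogalJ_le {a : Subgroup 𝔊} (ha : IsIdealSG Γ a) (hX : ∀ γ ∈ X, η γ ∈ a) :
    cogalJ Γ η X ≤ a :=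
  sInf_le ⟨ha, hX⟩

theorem apply_mem_cogalJ {γ : Γ} (hγ : γ ∈ X) : η γ ∈ cogalJ Γ η X :=
  Subgroup.mem_sInf.mpr fun _ hb => hb.2 γ hγ

theorem cogalJ_preimage_eq {a : Subgroup 𝔊} (ha : IsIdealSG Γ a)
    (ha_range : (a : Set 𝔊) ⊆ Set.range η) : cogalJ Γ η (η ⁻¹' a) = a := by
  refine le_antisymm (cogalJ_le ha fun _ hγ => hγ) fun g hg => ?_
  obtain ⟨γ, rfl⟩ := ha_range hg
  exact apply_mem_cogalJ hg

end cogalJ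

theorem kneser_triple_section_general
    {Γ 𝔊 : Type*} [Group Γ]
    [Group 𝔊] [TopologicalSpace 𝔊]
    [MulDistribMulAction Γ 𝔊]
    (η : Γ → 𝔊)
    (hsurj : Function.Surjective η) :
    (∀ a : Subgroup 𝔊, IsIdealSG Γ a →
        Function.Surjective (fun γ : Γ => (QuotientGroup.mk (η γ) : 𝔊 ⧸ a))) ∧
    (∀ a : Subgroup 𝔊, IsIdealSG Γ a →
        cogalJ Γ η (η ⁻¹' (a : Set 𝔊)) = a) :=
  ⟨fun _ _ => QuotientGroup.mk_surjective.comp hsurj,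
    fun _ ha => cogalJ_preimage_eq ha fun g _ => hsurj g⟩

/-- If `(Γ, 𝔊, η)` is a Kneser triple (i.e. the generating cocycle `η` is surjective), then
every ideal `a` of `𝔊` is a Kneser ideal (the induced cocycle `η_a : Γ → 𝔊/a` is
surjective), and `S = η⁻¹(·)` is a section of `J`: `J(S(a)) = a` for every ideal `a`. -/
theorem kneser_triple_section
    {Γ 𝔊 : Type*} [Group Γ] [TopologicalSpace Γ] [IsTopologicalGroup Γ]
    [CompactSpace Γ] [T2Space Γ] [TotallyDisconnectedSpace Γ]
    [Group 𝔊] [TopologicalSpace 𝔊] [IsTopologicalGroup 𝔊]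
    [CompactSpace 𝔊] [T2Space 𝔊] [TotallyDisconnectedSpace 𝔊]
    [MulDistribMulAction Γ 𝔊] [ContinuousSMul Γ 𝔊]
    (η : Γ → 𝔊) (hcont : Continuous η)
    (hcoc : ∀ σ τ : Γ, η (σ * τ) = η σ * σ • η τ)
    (hgen : (Subgroup.closure (Set.range η)).topologicalClosure = ⊤)
    (hsurj : Function.Surjective η) :
    (∀ a : Subgroup 𝔊, IsIdealSG Γ a →
        Function.Surjective (fun γ : Γ => (QuotientGroup.mk (η γ) : 𝔊 ⧸ a))) ∧
    (∀ a : Subgroup 𝔊, IsIdealSG Γ a →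
        cogalJ Γ η (η ⁻¹' (a : Set 𝔊)) = a) :=
  kneser_triple_section_general η hsurj
end

section
/- (Abstract Kneser Criterion) Let η : Γ → 𝔊 be a generating cocycle. Every ideal of 𝔊 that is maximal (with respect to inclusion) among the non-Kneser ideals is an open ideal, and for every ideal a of 𝔊 the following are equivalent: (1) a is a Kneser ideal; (2) a ⊄ m for every ideal m maximal among the non-Kneser ideals of 𝔊. -/
/-- An ideal `a` of `𝔊` is a *Kneser ideal* (with respect to a cocycle `η : Γ → 𝔊`) if the
induced cocycle `η_a : Γ → 𝔊/a` is surjective. -/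
def IsKneserIdeal {Γ 𝔊 : Type*} [Group 𝔊] [TopologicalSpace 𝔊] [SMul Γ 𝔊]
    (η : Γ → 𝔊) (a : Subgroup 𝔊) : Prop :=
  Function.Surjective (fun γ : Γ => (QuotientGroup.mk (η γ) : 𝔊 ⧸ a))

/-- An ideal of `𝔊` maximal (w.r.t. inclusion) among the non-Kneser ideals. -/
def IsMaxNonKneserIdeal (Γ : Type*) {𝔊 : Type*} [Group 𝔊] [TopologicalSpace 𝔊] [SMul Γ 𝔊]
    (η : Γ → 𝔊) (m : Subgroup 𝔊) : Prop :=
  IsIdealSG Γ m ∧ ¬ IsKneserIdeal η m ∧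
    ∀ m' : Subgroup 𝔊, IsIdealSG Γ m' → ¬ IsKneserIdeal η m' → m ≤ m' → m' = m


/-! A non-Kneser ideal `a` lies in an open non-Kneser ideal. Otherwise, for each `g`, the sets
`{γ | (η γ)⁻¹ * g ∈ b}`, for `b` running over the open ideals above `a`, are closed, nonempty
and directed, so compactness of `Γ` gives a common point `γ`; then `(η γ)⁻¹ * g ∈ a`, because a
closed ideal of a profinite group is the intersection of the open ideals above it (the open
normal subgroups around `1`, shrunk to their `Γ`-cores, which stay open by the tube lemma).
An open ideal has only finitely many subgroups above it, so a maximal non-Kneser ideal lies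
above it, and a maximal non-Kneser ideal equals the open non-Kneser ideal above it.
-/

open Topology

lemma Subgroup.finite_setOf_le_of_isOpen {G : Type*} [Group G] [TopologicalSpace G]
    [IsTopologicalGroup G] [CompactSpace G] (N : Subgroup G) [N.Normal]
    (hN : IsOpen (N : Set G)) : {H : Subgroup G | N ≤ H}.Finite := by
  have : Finite (G ⧸ N) := N.quotient_finite_of_isOpen hN
  have : Finite {H : Subgroup G // N ≤ H} := .of_equiv _ (QuotientGroup.comapMk'OrderIso N).toEquiv
  exact Set.finite_coe_iff.mp this

section Ideals

variable {Γ 𝔊 : Type*} [Monoid Γ] [Group 𝔊] [MulDistribMulAction Γ 𝔊]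

variable (Γ) in
def Subgroup.smulCore (H : Subgroup 𝔊) : Subgroup 𝔊 :=
  ⨅ γ : Γ, H.comap (MulDistribMulAction.toMonoidHom 𝔊 γ)

@[simp]
lemma Subgroup.mem_smulCore {H : Subgroup 𝔊} {x : 𝔊} :
    x ∈ H.smulCore Γ ↔ ∀ γ : Γ, γ • x ∈ H := by
  simp [Subgroup.smulCore, Subgroup.mem_iInf]

lemma Subgroup.smulCore_le (H : Subgroup 𝔊) : H.smulCore Γ ≤ H := fun x hx => by
  simpa using Subgroup.mem_smulCore.mp hx 1

variable [TopologicalSpace 𝔊]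

lemma Subgroup.isOpen_smulCore [TopologicalSpace Γ] [CompactSpace Γ] [ContinuousSMul Γ 𝔊]
    [IsTopologicalGroup 𝔊] {H : Subgroup 𝔊} (hH : IsOpen (H : Set 𝔊)) :
    IsOpen (H.smulCore Γ : Set 𝔊) := by
  refine Subgroup.isOpen_of_mem_nhds _ (g := 1) ?_
  have hnhds : ∀ γ : Γ, ∀ᶠ p : 𝔊 × Γ in 𝓝 (1, γ), p.2 • p.1 ∈ H := fun γ =>
    (continuous_snd.smul continuous_fst).continuousAt.preimage_mem_nhds
      (hH.mem_nhds (by simp [H.one_mem]))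
  filter_upwards [isCompact_univ.eventually_forall_of_forall_eventually (P := fun x γ => γ • x ∈ H)
    fun γ _ => hnhds γ] with x hx
  exact Subgroup.mem_smulCore.mpr fun γ => hx γ (Set.mem_univ γ)

lemma IsIdealSG.inf {a b : Subgroup 𝔊} (ha : IsIdealSG Γ a) (hb : IsIdealSG Γ b) :
    IsIdealSG Γ (a ⊓ b) :=
  have := ha.2.1
  have := hb.2.1
  ⟨ha.1.inter hb.1, inferInstance, fun γ g hg => ⟨ha.2.2 γ g hg.1, hb.2.2 γ g hg.2⟩⟩

lemma IsIdealSG.sup_of_isOpen [IsTopologicalGroup 𝔊] {a b : Subgroup 𝔊} (ha : IsIdealSG Γ a)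
    (hb : IsIdealSG Γ b) (hbo : IsOpen (b : Set 𝔊)) : IsIdealSG Γ (a ⊔ b) := by
  have := ha.2.1
  have := hb.2.1
  refine ⟨(a ⊔ b).isClosed_of_isOpen (Subgroup.isOpen_mono le_sup_right hbo), inferInstance,
    fun γ g hg => ?_⟩
  have hinv : a ⊔ b ≤ (a ⊔ b).comap (MulDistribMulAction.toMonoidHom 𝔊 γ) :=
    sup_le (fun x hx => Subgroup.mem_sup_left (ha.2.2 γ x hx))
      (fun x hx => Subgroup.mem_sup_right (hb.2.2 γ x hx))
  exact hinv hg

variable [TopologicalSpace Γ] [CompactSpace Γ] [ContinuousSMul Γ 𝔊] [IsTopologicalGroup 𝔊]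
  [CompactSpace 𝔊] [TotallyDisconnectedSpace 𝔊]

lemma exists_isIdealSG_isOpen_subset {U : Set 𝔊} (hU : IsOpen U) (h1 : (1 : 𝔊) ∈ U) :
    ∃ N : Subgroup 𝔊, IsIdealSG Γ N ∧ IsOpen (N : Set 𝔊) ∧ (N : Set 𝔊) ⊆ U := by
  obtain ⟨H, hHU⟩ := ProfiniteGrp.exist_openNormalSubgroup_sub_open_nhds_of_one hU h1
  have hopen : IsOpen (H.smulCore Γ : Set 𝔊) := Subgroup.isOpen_smulCore H.isOpen'
  refine ⟨H.smulCore Γ, ⟨Subgroup.isClosed_of_isOpen _ hopen, ⟨fun n hn g => ?_⟩,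
    fun γ g hg => ?_⟩, hopen, fun x hx => hHU (Subgroup.smulCore_le _ hx)⟩
  · simp only [Subgroup.mem_smulCore, smul_mul', smul_inv'] at hn ⊢
    exact fun γ => H.isNormal'.conj_mem _ (hn γ) _
  · simp only [Subgroup.mem_smulCore, smul_smul] at hg ⊢
    exact fun δ => hg (δ * γ)

lemma IsIdealSG.mem_of_forall_isOpen {a : Subgroup 𝔊} (ha : IsIdealSG Γ a) {x : 𝔊}
    (hx : ∀ b : Subgroup 𝔊, IsIdealSG Γ b → IsOpen (b : Set 𝔊) → a ≤ b → x ∈ b) : x ∈ a := by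
  by_contra hxa
  have hU : IsOpen {n : 𝔊 | x * n ∉ a} := ha.1.isOpen_compl.preimage (continuous_const_mul x)
  obtain ⟨N, hN, hNo, hNU⟩ := exists_isIdealSG_isOpen_subset (Γ := Γ) hU (by simpa using hxa)
  have := ha.2.1
  obtain ⟨y, hy, n, hn, rfl⟩ :=
    Subgroup.mem_sup_of_normal_left.mp (hx _ (ha.sup_of_isOpen hN hNo) (Subgroup.isOpen_mono
      le_sup_right hNo) le_sup_left)
  exact hNU (N.inv_mem hn) (by simpa using hy)

end Ideals

section Kneser

variable {Γ 𝔊 : Type*} [Group 𝔊] [TopologicalSpace 𝔊] [SMul Γ 𝔊] {η : Γ → 𝔊}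

lemma isKneserIdeal_iff {a : Subgroup 𝔊} :
    IsKneserIdeal η a ↔ ∀ g : 𝔊, ∃ γ : Γ, (η γ)⁻¹ * g ∈ a := by
  simp only [IsKneserIdeal, QuotientGroup.mk_surjective.forall, Function.Surjective,
    QuotientGroup.eq]

lemma IsKneserIdeal.mono {a b : Subgroup 𝔊} (hab : a ≤ b) (ha : IsKneserIdeal η a) :
    IsKneserIdeal η b :=
  isKneserIdeal_iff.mpr fun g => (isKneserIdeal_iff.mp ha g).imp fun _ hγ => hab hγ

end Kneser

section Criterion

variable {Γ 𝔊 : Type*} [Monoid Γ] [TopologicalSpace Γ] [CompactSpace Γ] [Group 𝔊]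
  [TopologicalSpace 𝔊] [IsTopologicalGroup 𝔊] [CompactSpace 𝔊] [TotallyDisconnectedSpace 𝔊]
  [MulDistribMulAction Γ 𝔊] [ContinuousSMul Γ 𝔊] {η : Γ → 𝔊}

lemma exists_isOpen_le_not_isKneserIdeal (hη : Continuous η) {a : Subgroup 𝔊}
    (ha : IsIdealSG Γ a) (hna : ¬ IsKneserIdeal η a) :
    ∃ b : Subgroup 𝔊, IsIdealSG Γ b ∧ IsOpen (b : Set 𝔊) ∧ a ≤ b ∧ ¬ IsKneserIdeal η b := by
  by_contra! hopen
  refine hna (isKneserIdeal_iff.mpr fun g => ?_)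
  let B := {b : Subgroup 𝔊 // IsIdealSG Γ b ∧ IsOpen (b : Set 𝔊) ∧ a ≤ b}
  have : Nonempty B := ⟨⊤, ⟨isClosed_univ, inferInstance, fun _ _ _ => trivial⟩, isOpen_univ,
    le_top⟩
  let C : B → Set Γ := fun b => {γ | (η γ)⁻¹ * g ∈ b.1}
  have hC_closed (b : B) : IsClosed (C b) :=
    (b.1.isClosed_of_isOpen b.2.2.1).preimage (hη.inv.mul continuous_const)
  have hC_nonempty (b : B) : (C b).Nonempty :=
    isKneserIdeal_iff.mp (hopen b.1 b.2.1 b.2.2.1 b.2.2.2) g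
  have hC_directed : Directed (· ⊇ ·) C := fun b₁ b₂ =>
    ⟨⟨b₁.1 ⊓ b₂.1, b₁.2.1.inf b₂.2.1, b₁.2.2.1.inter b₂.2.2.1, le_inf b₁.2.2.2 b₂.2.2.2⟩,
      fun _ hγ => hγ.1, fun _ hγ => hγ.2⟩
  obtain ⟨γ, hγ⟩ := IsCompact.nonempty_iInter_of_directed_nonempty_isCompact_isClosed C
    hC_directed hC_nonempty (fun b => (hC_closed b).isCompact) hC_closed
  exact ⟨γ, ha.mem_of_forall_isOpen fun b hb hbo hab => Set.mem_iInter.mp hγ ⟨b, hb, hbo, hab⟩⟩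

lemma IsMaxNonKneserIdeal.isOpen (hη : Continuous η) {m : Subgroup 𝔊}
    (hm : IsMaxNonKneserIdeal Γ η m) : IsOpen (m : Set 𝔊) := by
  obtain ⟨b, hb, hbo, hmb, hnb⟩ := exists_isOpen_le_not_isKneserIdeal hη hm.1 hm.2.1
  rwa [← hm.2.2 b hb hnb hmb]

end Criterion

lemma exists_isMaxNonKneserIdeal_ge {Γ 𝔊 : Type*} [Group 𝔊] [TopologicalSpace 𝔊]
    [IsTopologicalGroup 𝔊] [CompactSpace 𝔊] [SMul Γ 𝔊] {η : Γ → 𝔊} {b : Subgroup 𝔊}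
    (hb : IsIdealSG Γ b) (hbo : IsOpen (b : Set 𝔊)) (hnb : ¬ IsKneserIdeal η b) :
    ∃ m : Subgroup 𝔊, IsMaxNonKneserIdeal Γ η m ∧ b ≤ m := by
  have := hb.2.1
  have hfin : {K : Subgroup 𝔊 | IsIdealSG Γ K ∧ ¬ IsKneserIdeal η K ∧ b ≤ K}.Finite :=
    (b.finite_setOf_le_of_isOpen hbo).subset fun K hK => hK.2.2
  obtain ⟨m, ⟨hm, hnm, hbm⟩, hmax⟩ := hfin.exists_maximalFor id _ ⟨b, hb, hnb, le_rfl⟩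
  exact ⟨m, ⟨hm, hnm, fun m' hm' hnm' hmm' =>
    le_antisymm (hmax ⟨hm', hnm', hbm.trans hmm'⟩ hmm') hmm'⟩, hbm⟩

theorem abstract_kneser_criterion_general
    {Γ 𝔊 : Type*} [Group Γ] [TopologicalSpace Γ] [CompactSpace Γ]
    [Group 𝔊] [TopologicalSpace 𝔊] [IsTopologicalGroup 𝔊]
    [CompactSpace 𝔊] [TotallyDisconnectedSpace 𝔊]
    [MulDistribMulAction Γ 𝔊] [ContinuousSMul Γ 𝔊]
    (η : Γ → 𝔊) (hcont : Continuous η) :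
    (∀ m : Subgroup 𝔊, IsMaxNonKneserIdeal Γ η m → IsOpen (m : Set 𝔊)) ∧
    (∀ a : Subgroup 𝔊, IsIdealSG Γ a →
      (IsKneserIdeal η a ↔ ∀ m : Subgroup 𝔊, IsMaxNonKneserIdeal Γ η m → ¬ a ≤ m)) := by
  refine ⟨fun m hm => hm.isOpen hcont, fun a ha => ⟨?_, ?_⟩⟩
  · exact fun hka m hm ham => hm.2.1 (hka.mono ham)
  · intro h
    by_contra hna
    obtain ⟨b, hb, hbo, hab, hnb⟩ := exists_isOpen_le_not_isKneserIdeal hcont ha hna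
    obtain ⟨m, hm, hbm⟩ := exists_isMaxNonKneserIdeal_ge hb hbo hnb
    exact h m hm (hab.trans hbm)

/-- **Abstract Kneser criterion.**  For a generating cocycle `η : Γ → 𝔊`, every ideal of `𝔊`
maximal among the non-Kneser ideals is open, and an ideal `a` of `𝔊` is a Kneser ideal if and
only if `a` is not contained in any such maximal non-Kneser ideal. -/
theorem abstract_kneser_criterion
    {Γ 𝔊 : Type*} [Group Γ] [TopologicalSpace Γ] [IsTopologicalGroup Γ]
    [CompactSpace Γ] [T2Space Γ] [TotallyDisconnectedSpace Γ]
    [Group 𝔊] [TopologicalSpace 𝔊] [IsTopologicalGroup 𝔊]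
    [CompactSpace 𝔊] [T2Space 𝔊] [TotallyDisconnectedSpace 𝔊]
    [MulDistribMulAction Γ 𝔊] [ContinuousSMul Γ 𝔊]
    (η : Γ → 𝔊) (hcont : Continuous η)
    (hcoc : ∀ σ τ : Γ, η (σ * τ) = η σ * σ • η τ)
    (hgen : (Subgroup.closure (Set.range η)).topologicalClosure = ⊤) :
    (∀ m : Subgroup 𝔊, IsMaxNonKneserIdeal Γ η m → IsOpen (m : Set 𝔊)) ∧
    (∀ a : Subgroup 𝔊, IsIdealSG Γ a →
      (IsKneserIdeal η a ↔ ∀ m : Subgroup 𝔊, IsMaxNonKneserIdeal Γ η m → ¬ a ≤ m)) :=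
  abstract_kneser_criterion_general η hcont
end

section
/- Let η : Γ → 𝔊 be a generating cocycle with kernel Δ. Then the following are equivalent: (1) (Γ,𝔊,η) is a coGalois triple, i.e. η is surjective and the maps J and S between the poset of closed subgroups of Γ containing Δ and the poset of ideals of 𝔊 are mutually inverse order isomorphisms; (2) η is surjective and S(J(Λ)) = Λ for every closed subgroup Λ of Γ containing Δ; (3) η is surjective and J is injective; (4) η is surjective and S is surjective; (5) η(Λ) = J(Λ) for every closed subgroup Λ of Γ containing Δ; (6) η(Λ) is an ideal of 𝔊 for every closed subgroup Λ of Γ containing Δ. -/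
open Set Function

def IsOneCocycle {Γ G : Type*} [Mul Γ] [Mul G] [SMul Γ G] (η : Γ → G) : Prop :=
  ∀ σ τ : Γ, η (σ * τ) = η σ * σ • η τ

namespace IsOneCocycle

variable {Γ G : Type*} [Group Γ] [Group G] [MulAction Γ G] {η : Γ → G}

theorem map_one (hη : IsOneCocycle η) : η 1 = 1 := by
  simpa using hη 1 1

theorem map_inv (hη : IsOneCocycle η) (σ : Γ) : η σ⁻¹ = (σ⁻¹ • η σ)⁻¹ := by
  have h := hη σ⁻¹ σ
  rw [inv_mul_cancel, hη.map_one] at h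
  exact eq_inv_of_mul_eq_one_left h.symm

theorem map_inv_mul_eq_one_iff (hη : IsOneCocycle η) {σ τ : Γ} :
    η (τ⁻¹ * σ) = 1 ↔ η σ = η τ := by
  rw [hη τ⁻¹ σ, hη.map_inv, inv_mul_eq_one, smul_left_cancel_iff, eq_comm]

def comapSubgroup (hη : IsOneCocycle η) (a : Subgroup G) (ha : ∀ γ : Γ, ∀ g ∈ a, γ • g ∈ a) :
    Subgroup Γ where
  carrier := η ⁻¹' a
  one_mem' := by simp [hη.map_one]
  mul_mem' {σ τ} hσ hτ := by
    simp only [mem_preimage, hη σ τ] at *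
    exact a.mul_mem hσ (ha σ _ hτ)
  inv_mem' {σ} hσ := by
    simp only [mem_preimage, hη.map_inv] at *
    exact a.inv_mem (ha σ⁻¹ _ hσ)

@[simp]
theorem mem_comapSubgroup (hη : IsOneCocycle η) {a : Subgroup G}
    {ha : ∀ γ : Γ, ∀ g ∈ a, γ • g ∈ a} {σ : Γ} : σ ∈ hη.comapSubgroup a ha ↔ η σ ∈ a :=
  Iff.rfl

theorem preimage_image_eq (hη : IsOneCocycle η) {Λ : Subgroup Γ} (hΛ : ∀ γ, η γ = 1 → γ ∈ Λ) :
    η ⁻¹' (η '' Λ) = Λ := by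
  refine (subset_preimage_image η _).antisymm' ?_
  rintro σ ⟨l, hl, hlσ⟩
  simpa using Λ.mul_mem hl (hΛ _ (hη.map_inv_mul_eq_one_iff.2 hlσ.symm))

end IsOneCocycle

section cogalJ

variable {Γ G : Type*} [Group G] [TopologicalSpace G] [SMul Γ G] {η : Γ → G}

theorem isIdealSG_cogalJ (X : Set Γ) : IsIdealSG Γ (cogalJ Γ η X) := by
  refine ⟨?_, ⟨fun n hn g => ?_⟩, fun γ g hg => ?_⟩
  · rw [cogalJ, Subgroup.coe_sInf]
    exact isClosed_biInter fun a ha => ha.1.1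
  · exact Subgroup.mem_sInf.2 fun a ha => ha.1.2.1.conj_mem n (Subgroup.mem_sInf.1 hn a ha) g
  · exact Subgroup.mem_sInf.2 fun a ha => ha.1.2.2 γ g (Subgroup.mem_sInf.1 hg a ha)

theorem mem_cogalJ {X : Set Γ} {γ : Γ} (hγ : γ ∈ X) : η γ ∈ cogalJ Γ η X :=
  Subgroup.mem_sInf.2 fun _ ha => ha.2 γ hγ

theorem cogalJ_le_iff_s13 {X : Set Γ} {a : Subgroup G} (ha : IsIdealSG Γ a) :
    cogalJ Γ η X ≤ a ↔ X ⊆ η ⁻¹' a :=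
  ⟨fun h _ hγ => h (mem_cogalJ hγ), fun h => sInf_le ⟨ha, h⟩⟩

theorem cogalJ_preimage_cogalJ (X : Set Γ) :
    cogalJ Γ η (η ⁻¹' cogalJ Γ η X) = cogalJ Γ η X :=
  le_antisymm ((cogalJ_le_iff_s13 (isIdealSG_cogalJ X)).2 subset_rfl)
    ((cogalJ_le_iff_s13 (isIdealSG_cogalJ _)).2 fun _ hγ => mem_cogalJ (mem_cogalJ hγ))

theorem cogalJ_eq_of_image_eq {X : Set Γ} {a : Subgroup G} (ha : IsIdealSG Γ a)
    (h : η '' X = a) : cogalJ Γ η X = a := by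
  refine le_antisymm ((cogalJ_le_iff_s13 ha).2 fun γ hγ => ?_) fun g hg => ?_
  · exact h ▸ mem_image_of_mem η hγ
  · obtain ⟨γ, hγ, rfl⟩ : g ∈ η '' X := h ▸ hg
    exact mem_cogalJ hγ

theorem cogalJ_univ_eq_top [IsTopologicalGroup G]
    (hgen : (Subgroup.closure (range η)).topologicalClosure = ⊤) : cogalJ Γ η univ = ⊤ :=
  top_unique <| hgen ▸ Subgroup.topologicalClosure_minimal _
    (Subgroup.closure_le _ |>.2 <| range_subset_iff.2 fun _ => mem_cogalJ trivial)
    (isIdealSG_cogalJ _).1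

end cogalJ

theorem coGalois_triple_TFAE_general
    {Γ 𝔊 : Type*} [Group Γ] [TopologicalSpace Γ]
    [Group 𝔊] [TopologicalSpace 𝔊] [IsTopologicalGroup 𝔊]
    [MulDistribMulAction Γ 𝔊]
    (η : Γ → 𝔊) (hcont : Continuous η)
    (hcoc : ∀ σ τ : Γ, η (σ * τ) = η σ * σ • η τ)
    (hgen : (Subgroup.closure (Set.range η)).topologicalClosure = ⊤) :
    List.TFAE
      [Function.Surjective η ∧
         (∀ Λ : Subgroup Γ, IsClosed (Λ : Set Γ) → (∀ γ : Γ, η γ = 1 → γ ∈ Λ) →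
            η ⁻¹' ((cogalJ Γ η (Λ : Set Γ) : Subgroup 𝔊) : Set 𝔊) = (Λ : Set Γ)) ∧
         (∀ a : Subgroup 𝔊, IsIdealSG Γ a → cogalJ Γ η (η ⁻¹' (a : Set 𝔊)) = a),
       Function.Surjective η ∧
         (∀ Λ : Subgroup Γ, IsClosed (Λ : Set Γ) → (∀ γ : Γ, η γ = 1 → γ ∈ Λ) →
            η ⁻¹' ((cogalJ Γ η (Λ : Set Γ) : Subgroup 𝔊) : Set 𝔊) = (Λ : Set Γ)),
       Function.Surjective η ∧
         (∀ Λ₁ Λ₂ : Subgroup Γ,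
            IsClosed (Λ₁ : Set Γ) → (∀ γ : Γ, η γ = 1 → γ ∈ Λ₁) →
            IsClosed (Λ₂ : Set Γ) → (∀ γ : Γ, η γ = 1 → γ ∈ Λ₂) →
            cogalJ Γ η (Λ₁ : Set Γ) = cogalJ Γ η (Λ₂ : Set Γ) → Λ₁ = Λ₂),
       Function.Surjective η ∧
         (∀ Λ : Subgroup Γ, IsClosed (Λ : Set Γ) → (∀ γ : Γ, η γ = 1 → γ ∈ Λ) →
            ∃ a : Subgroup 𝔊, IsIdealSG Γ a ∧ η ⁻¹' (a : Set 𝔊) = (Λ : Set Γ)),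
       ∀ Λ : Subgroup Γ, IsClosed (Λ : Set Γ) → (∀ γ : Γ, η γ = 1 → γ ∈ Λ) →
          η '' (Λ : Set Γ) = ((cogalJ Γ η (Λ : Set Γ) : Subgroup 𝔊) : Set 𝔊),
       ∀ Λ : Subgroup Γ, IsClosed (Λ : Set Γ) → (∀ γ : Γ, η γ = 1 → γ ∈ Λ) →
          ∃ a : Subgroup 𝔊, IsIdealSG Γ a ∧ (a : Set 𝔊) = η '' (Λ : Set Γ)] := by
  have hη : IsOneCocycle η := hcoc
  tfae_have 1 → 2 := fun ⟨hsurj, hSJ, _⟩ => ⟨hsurj, hSJ⟩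
  tfae_have 2 → 3 := fun ⟨hsurj, hSJ⟩ => ⟨hsurj, fun Λ₁ Λ₂ hc₁ hΔ₁ hc₂ hΔ₂ hJ =>
    SetLike.coe_injective <| by rw [← hSJ Λ₁ hc₁ hΔ₁, ← hSJ Λ₂ hc₂ hΔ₂, hJ]⟩
  tfae_have 3 → 4 := by
    rintro ⟨hsurj, hJinj⟩
    refine ⟨hsurj, fun Λ hc hΔ => ?_⟩
    have hJ : IsIdealSG Γ (cogalJ Γ η Λ) := isIdealSG_cogalJ _
    refine ⟨_, hJ, ?_⟩
    have hSJ : hη.comapSubgroup _ hJ.2.2 = Λ :=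
      hJinj _ Λ (hJ.1.preimage hcont) (fun γ hγ => by simp [hγ]) hc hΔ
        (cogalJ_preimage_cogalJ _)
    exact congr_arg SetLike.coe hSJ
  tfae_have 4 → 6 := fun ⟨hsurj, hS⟩ Λ hc hΔ =>
    let ⟨a, ha, haΛ⟩ := hS Λ hc hΔ
    ⟨a, ha, by rw [← haΛ, image_preimage_eq _ hsurj]⟩
  tfae_have 6 → 5 := fun h Λ hc hΔ =>
    let ⟨a, ha, haΛ⟩ := h Λ hc hΔ
    by rw [cogalJ_eq_of_image_eq ha haΛ.symm, haΛ]
  tfae_have 5 → 1 := by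
    intro h5
    have hsurj : Surjective η := by
      have himage := h5 ⊤ isClosed_univ fun _ _ => trivial
      rw [Subgroup.coe_top, image_univ, cogalJ_univ_eq_top hgen, Subgroup.coe_top] at himage
      exact range_eq_univ.1 himage
    refine ⟨hsurj, fun Λ hc hΔ => ?_,
      fun a ha => cogalJ_eq_of_image_eq ha (image_preimage_eq _ hsurj)⟩
    rw [← h5 Λ hc hΔ, hη.preimage_image_eq hΔ]
  tfae_finish

/-- Characterizations of coGalois triples: for a generating cocycle `η : Γ → 𝔊` with kernel
`Δ`, the following are equivalent:
(1) `(Γ,𝔊,η)` is a coGalois triple: `η` is surjective and the maps `J` and `S` are mutually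
inverse order isomorphisms between the closed subgroups of `Γ` containing `Δ` and the ideals
of `𝔊`;
(2) `η` is surjective and `S ∘ J = id`;
(3) `η` is surjective and `J` is injective;
(4) `η` and `S` are surjective;
(5) `η(Λ) = J(Λ)` for all closed `Λ ⊇ Δ`;
(6) `η(Λ)` is an ideal of `𝔊` for all closed `Λ ⊇ Δ`. -/
theorem coGalois_triple_TFAE
    {Γ 𝔊 : Type*} [Group Γ] [TopologicalSpace Γ] [IsTopologicalGroup Γ]
    [CompactSpace Γ] [T2Space Γ] [TotallyDisconnectedSpace Γ]
    [Group 𝔊] [TopologicalSpace 𝔊] [IsTopologicalGroup 𝔊]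
    [CompactSpace 𝔊] [T2Space 𝔊] [TotallyDisconnectedSpace 𝔊]
    [MulDistribMulAction Γ 𝔊] [ContinuousSMul Γ 𝔊]
    (η : Γ → 𝔊) (hcont : Continuous η)
    (hcoc : ∀ σ τ : Γ, η (σ * τ) = η σ * σ • η τ)
    (hgen : (Subgroup.closure (Set.range η)).topologicalClosure = ⊤) :
    List.TFAE
      [Function.Surjective η ∧
         (∀ Λ : Subgroup Γ, IsClosed (Λ : Set Γ) → (∀ γ : Γ, η γ = 1 → γ ∈ Λ) →
            η ⁻¹' ((cogalJ Γ η (Λ : Set Γ) : Subgroup 𝔊) : Set 𝔊) = (Λ : Set Γ)) ∧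
         (∀ a : Subgroup 𝔊, IsIdealSG Γ a → cogalJ Γ η (η ⁻¹' (a : Set 𝔊)) = a),
       Function.Surjective η ∧
         (∀ Λ : Subgroup Γ, IsClosed (Λ : Set Γ) → (∀ γ : Γ, η γ = 1 → γ ∈ Λ) →
            η ⁻¹' ((cogalJ Γ η (Λ : Set Γ) : Subgroup 𝔊) : Set 𝔊) = (Λ : Set Γ)),
       Function.Surjective η ∧
         (∀ Λ₁ Λ₂ : Subgroup Γ,
            IsClosed (Λ₁ : Set Γ) → (∀ γ : Γ, η γ = 1 → γ ∈ Λ₁) →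
            IsClosed (Λ₂ : Set Γ) → (∀ γ : Γ, η γ = 1 → γ ∈ Λ₂) →
            cogalJ Γ η (Λ₁ : Set Γ) = cogalJ Γ η (Λ₂ : Set Γ) → Λ₁ = Λ₂),
       Function.Surjective η ∧
         (∀ Λ : Subgroup Γ, IsClosed (Λ : Set Γ) → (∀ γ : Γ, η γ = 1 → γ ∈ Λ) →
            ∃ a : Subgroup 𝔊, IsIdealSG Γ a ∧ η ⁻¹' (a : Set 𝔊) = (Λ : Set Γ)),
       ∀ Λ : Subgroup Γ, IsClosed (Λ : Set Γ) → (∀ γ : Γ, η γ = 1 → γ ∈ Λ) →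
          η '' (Λ : Set Γ) = ((cogalJ Γ η (Λ : Set Γ) : Subgroup 𝔊) : Set 𝔊),
       ∀ Λ : Subgroup Γ, IsClosed (Λ : Set Γ) → (∀ γ : Γ, η γ = 1 → γ ∈ Λ) →
          ∃ a : Subgroup 𝔊, IsIdealSG Γ a ∧ (a : Set 𝔊) = η '' (Λ : Set Γ)] :=
  coGalois_triple_TFAE_general η hcont hcoc hgen
end

section
/- Let Γ be a finite nonabelian simple group acting on itself by inner automorphisms, γ•g := γgγ⁻¹. Then: (1) every 1-cocycle η : Γ → Γ (i.e. η(στ) = η(σ)·σ η(τ) σ⁻¹) that is not identically 1 is a generating cocycle (η(Γ) generates Γ) and is normalized (⋂_{γ∈Γ} γ (ker η) γ⁻¹ = {1}); (2) for every g ≠ 1 in Γ, the coboundary η_g : Γ → Γ, η_g(γ) := gγg⁻¹γ⁻¹, is a 1-cocycle with ker η_g = C_Γ(g), the centralizer of g, and (Γ, Γ, η_g) is a minimal non-Kneser triple. -/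
/-- Let `Γ` be a finite nonabelian simple group acting on itself by inner automorphisms,
`γ • g = γgγ⁻¹`.  Then:
(1) every 1-cocycle `η : Γ → Γ` (i.e. `η(στ) = η(σ)·σ η(τ) σ⁻¹`) that is not identically `1`
is a generating cocycle and is normalized (`⋂_γ γ (ker η) γ⁻¹ = {1}`);
(2) for every `g ≠ 1`, the coboundary `η_g(γ) = gγg⁻¹γ⁻¹` is a 1-cocycle whose kernel is the
centralizer of `g`, and `(Γ, Γ, η_g)` is a minimal non-Kneser triple. -/
theorem simple_group_inner_cocycles
    (Γ : Type*) [Group Γ] [Finite Γ] [IsSimpleGroup Γ]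
    (hnab : ∃ a b : Γ, a * b ≠ b * a) :
    -- (1)
    (∀ η : Γ → Γ, (∀ σ τ : Γ, η (σ * τ) = η σ * (σ * η τ * σ⁻¹)) → (∃ γ, η γ ≠ 1) →
       Subgroup.closure (Set.range η) = ⊤ ∧
       (∀ x : Γ, (∀ γ : Γ, η (γ⁻¹ * x * γ) = 1) → x = 1)) ∧
    -- (2)
    (∀ g : Γ, g ≠ 1 →
      -- η_g is a 1-cocycle for the conjugation action
      (∀ σ τ : Γ, g * (σ * τ) * g⁻¹ * (σ * τ)⁻¹ =
          (g * σ * g⁻¹ * σ⁻¹) * (σ * (g * τ * g⁻¹ * τ⁻¹) * σ⁻¹)) ∧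
      -- its kernel is the centralizer of g
      {γ : Γ | g * γ * g⁻¹ * γ⁻¹ = 1} = {γ : Γ | γ ∈ Subgroup.centralizer {g}} ∧
      -- (Γ, Γ, η_g) is a minimal non-Kneser triple:
      -- η_g is a generating cocycle
      Subgroup.closure (Set.range (fun γ : Γ => g * γ * g⁻¹ * γ⁻¹)) = ⊤ ∧
      -- η_g is not surjective
      ¬ Function.Surjective (fun γ : Γ => g * γ * g⁻¹ * γ⁻¹) ∧
      -- the induced cocycle modulo every nontrivial ideal is surjective
      (∀ a : Subgroup Γ, a.Normal → a ≠ ⊥ →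
        Function.Surjective (fun γ : Γ => (QuotientGroup.mk (g * γ * g⁻¹ * γ⁻¹) : Γ ⧸ a))) ∧
      -- normalization: Fix_Γ(Γ) ∩ ker η_g = {1}
      (∀ x : Γ, (∀ y : Γ, x * y * x⁻¹ = y) → g * x * g⁻¹ * x⁻¹ = 1 → x = 1)) := by
  have hcenter : Subgroup.center Γ = ⊥ := by
    rcases IsSimpleGroup.eq_bot_or_eq_top_of_normal (Subgroup.center Γ) inferInstance with h | h
    · exact h
    · obtain ⟨a, b, hab⟩ := hnab
      exact absurd ((Subgroup.mem_center_iff.mp (h ▸ Subgroup.mem_top a)) b) (fun h' => hab h'.symm)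
  have part1 : ∀ η : Γ → Γ, (∀ σ τ : Γ, η (σ * τ) = η σ * (σ * η τ * σ⁻¹)) → (∃ γ, η γ ≠ 1) →
       Subgroup.closure (Set.range η) = ⊤ ∧
       (∀ x : Γ, (∀ γ : Γ, η (γ⁻¹ * x * γ) = 1) → x = 1) := by
    intro η hc hex
    obtain ⟨γ₀, hγ₀⟩ := hex
    have hη1 : η 1 = 1 := by
      have h := hc 1 1
      simp only [one_mul, mul_one, inv_one] at h
      exact (left_eq_mul.mp h)
    have hinv : ∀ σ : Γ, η σ = 1 → η σ⁻¹ = 1 := by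
      intro σ hσ
      have h := hc σ σ⁻¹
      rw [mul_inv_cancel, hη1, hσ, one_mul] at h
      have h2 : η σ⁻¹ = σ⁻¹ * (σ * η σ⁻¹ * σ⁻¹) * σ := by group
      rw [h2, ← h]; group
    -- generation
    have hconj : ∀ σ τ : Γ, σ * η τ * σ⁻¹ ∈ Subgroup.closure (Set.range η) := by
      intro σ τ
      have h : σ * η τ * σ⁻¹ = (η σ)⁻¹ * η (σ * τ) := by rw [hc σ τ]; group
      rw [h]
      exact mul_mem (inv_mem (Subgroup.subset_closure ⟨σ, rfl⟩))
        (Subgroup.subset_closure ⟨σ * τ, rfl⟩)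
    have hnormal : (Subgroup.closure (Set.range η)).Normal := by
      constructor
      intro n hn g
      induction hn using Subgroup.closure_induction with
      | mem x hx => obtain ⟨τ, rfl⟩ := hx; exact hconj g τ
      | one => simpa using (Subgroup.closure (Set.range η)).one_mem
      | mul x y _ _ hx hy =>
          have h : g * (x * y) * g⁻¹ = (g * x * g⁻¹) * (g * y * g⁻¹) := by group
          rw [h]; exact mul_mem hx hy
      | inv x _ hx =>
          have h : g * x⁻¹ * g⁻¹ = (g * x * g⁻¹)⁻¹ := by group
          rw [h]; exact inv_mem hx
    have hgen : Subgroup.closure (Set.range η) = ⊤ := by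
      rcases IsSimpleGroup.eq_bot_or_eq_top_of_normal _ hnormal with h | h
      · exact absurd (h ▸ Subgroup.subset_closure ⟨γ₀, rfl⟩ : η γ₀ ∈ (⊥ : Subgroup Γ)) (by simpa using hγ₀)
      · exact h
    refine ⟨hgen, ?_⟩
    -- the normal subgroup N
    let N : Subgroup Γ :=
      { carrier := {x | ∀ γ : Γ, η (γ⁻¹ * x * γ) = 1}
        one_mem' := by intro γ; simpa using hη1
        mul_mem' := by
          intro x y hx hy γ
          have h : γ⁻¹ * (x * y) * γ = (γ⁻¹ * x * γ) * (γ⁻¹ * y * γ) := by group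
          rw [h, hc, hx γ, hy γ]; group
        inv_mem' := by
          intro x hx γ
          have h : γ⁻¹ * x⁻¹ * γ = (γ⁻¹ * x * γ)⁻¹ := by group
          rw [h]; exact hinv _ (hx γ) }
    have hNnormal : N.Normal := by
      constructor
      intro n hn g γ
      have h : γ⁻¹ * (g * n * g⁻¹) * γ = (g⁻¹ * γ)⁻¹ * n * (g⁻¹ * γ) := by group
      rw [h]; exact hn (g⁻¹ * γ)
    intro x hx
    rcases IsSimpleGroup.eq_bot_or_eq_top_of_normal N hNnormal with h | h
    · have : x ∈ N := hx
      rw [h] at this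
      simpa using this
    · exfalso
      have : γ₀ ∈ N := h ▸ Subgroup.mem_top γ₀
      have := this 1
      simp only [inv_one, one_mul, mul_one] at this
      exact hγ₀ this
  refine ⟨part1, ?_⟩
  intro g hg
  have hcoc : ∀ σ τ : Γ, g * (σ * τ) * g⁻¹ * (σ * τ)⁻¹ =
      (g * σ * g⁻¹ * σ⁻¹) * (σ * (g * τ * g⁻¹ * τ⁻¹) * σ⁻¹) := by
    intro σ τ; group
  have hnc : ∃ γ : Γ, g * γ * g⁻¹ * γ⁻¹ ≠ 1 := by
    by_contra h
    push_neg at h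
    have : g ∈ Subgroup.center Γ := by
      rw [Subgroup.mem_center_iff]
      intro y
      have := h y
      rw [mul_inv_eq_one, mul_inv_eq_iff_eq_mul] at this
      exact this.symm
    rw [hcenter] at this
    exact hg (by simpa using this)
  refine ⟨hcoc, ?_, ?_, ?_, ?_, ?_⟩
  · ext γ
    simp only [Set.mem_setOf_eq, Subgroup.mem_centralizer_iff, Set.mem_singleton_iff, forall_eq]
    rw [mul_inv_eq_one, mul_inv_eq_iff_eq_mul]
  · exact (part1 _ hcoc hnc).1
  · intro hs
    have hinj : Function.Injective (fun γ : Γ => g * γ * g⁻¹ * γ⁻¹) :=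
      Finite.injective_iff_surjective.mpr hs
    exact hg (hinj (show g * g * g⁻¹ * g⁻¹ = g * 1 * g⁻¹ * 1⁻¹ by group))
  · intro a hN ha
    have hatop : a = ⊤ := by
      rcases IsSimpleGroup.eq_bot_or_eq_top_of_normal a hN with h | h
      · exact absurd h ha
      · exact h
    intro y
    obtain ⟨z, rfl⟩ := QuotientGroup.mk_surjective y
    refine ⟨1, ?_⟩
    show (QuotientGroup.mk (g * 1 * g⁻¹ * 1⁻¹) : Γ ⧸ a) = QuotientGroup.mk z
    rw [QuotientGroup.eq, hatop]
    exact Subgroup.mem_top _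
  · intro x hx _
    have : x ∈ Subgroup.center Γ := by
      rw [Subgroup.mem_center_iff]
      intro y
      exact (mul_inv_eq_iff_eq_mul.mp (hx y)).symm
    rw [hcenter] at this
    simpa using this
end
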